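/- arXiv:1303.5829 — 13 statements merged into one kernel-verified Lean document; each statement's English description precedes it below -/
import Mathlib

section
/- Let F be a differential field with derivation ′. Let r, ω, b ∈ F, and let u₁, u₂ ∈ F satisfy u₁″ = r·u₁ and u₂″ = r·u₂, with nonzero Wronskian W := u₁·u₂′ − u₂·u₁′ ≠ 0. Then there exists y ∈ F with y″ = r·y + ω·b if and only if there exist Φ₁, Φ₂ ∈ F with Φ₁′ = ω·u₁·b and Φ₂′ = ω·u₂·b. -/
/-- A differential field is a field `F` equipped with an additive map `D : F → F`
satisfying the Leibniz rule. Given `r, ω, b ∈ F` and two solutions `u₁, u₂` of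
`u'' = r u` with nonzero Wronskian, the non-homogeneous equation `y'' = r y + ω b`
has a solution in `F` iff the two integrals `∫ ω uᵢ b` exist in `F`. -/
theorem stmt_0 {F : Type*} [Field F] (D : F → F)
    (hadd : ∀ a b : F, D (a + b) = D a + D b)
    (hmul : ∀ a b : F, D (a * b) = D a * b + a * D b)
    (r ω b u₁ u₂ : F)
    (hu₁ : D (D u₁) = r * u₁) (hu₂ : D (D u₂) = r * u₂)
    (hW : u₁ * D u₂ - u₂ * D u₁ ≠ 0) :
    (∃ y : F, D (D y) = r * y + ω * b) ↔
      (∃ Φ₁ Φ₂ : F, D Φ₁ = ω * u₁ * b ∧ D Φ₂ = ω * u₂ * b) := by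
  have h0 : D 0 = 0 := by
    have := hadd 0 0; simpa using this
  have hneg : ∀ a : F, D (-a) = -D a := by
    intro a
    have h := hadd a (-a)
    rw [add_neg_cancel, h0] at h
    linear_combination -h
  have hsub : ∀ a b : F, D (a - b) = D a - D b := by
    intro a b
    rw [sub_eq_add_neg, hadd, hneg, sub_eq_add_neg]
  constructor
  · rintro ⟨y, hy⟩
    refine ⟨u₁ * D y - y * D u₁, u₂ * D y - y * D u₂, ?_, ?_⟩
    · rw [hsub, hmul, hmul, hy, hu₁]; ring
    · rw [hsub, hmul, hmul, hy, hu₂]; ring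
  · rintro ⟨Φ₁, Φ₂, h₁, h₂⟩
    set W := u₁ * D u₂ - u₂ * D u₁ with hWdef
    have hDW : D W = 0 := by
      rw [hWdef, hsub, hmul, hmul, hu₁, hu₂]; ring
    have h1 : D (1 : F) = 0 := by
      have := hmul 1 1; simpa using this
    have hDWinv : D W⁻¹ = 0 := by
      have h := hmul W W⁻¹
      rw [mul_inv_cancel₀ hW, h1, hDW] at h
      have : W * D W⁻¹ = 0 := by linear_combination -h
      rcases mul_eq_zero.mp this with h' | h'
      · exact absurd h' hW
      · exact h'
    refine ⟨(u₂ * Φ₁ - u₁ * Φ₂) * W⁻¹, ?_⟩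
    set z := u₂ * Φ₁ - u₁ * Φ₂ with hz
    have hDz : D z = (D u₂ * Φ₁ - D u₁ * Φ₂) := by
      rw [hz, hsub, hmul, hmul, h₁, h₂]; ring
    have hDDz : D (D z) = r * z + ω * b * W := by
      rw [hDz, hsub, hmul, hmul, h₁, h₂, hu₁, hu₂, hz, hWdef]; ring
    rw [hmul, hDWinv, mul_zero, add_zero, hmul, hDWinv, mul_zero, add_zero, hDDz]
    field_simp
end

section
/- Let L be a field, K ⊆ L a subfield, C ⊆ K a subfield, and σ : L → L a ring homomorphism with σ(K) ⊆ K and σ fixing C pointwise. Let Φ, I ∈ L and χ_Φ, χ_I, c_Φ, c_I, d ∈ C satisfy σ(Φ) = χ_Φ·Φ + c_Φ and σ(I) = χ_I·I + c_I. If χ_Φ ≠ χ_I and Φ + d·I ∈ K, then Φ ∈ K. -/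
/-- If a ring endomorphism `σ` of a field `L` maps a subfield `K` into itself, fixes a
subfield `C` of `K` pointwise, and acts affinely with characters `χ_Φ ≠ χ_I` (in `C`)
on `Φ` and `I`, then an Ostrowski relation `Φ + d·I ∈ K` forces `Φ ∈ K`. -/
theorem stmt_1 {L : Type*} [Field L] (K C : Subfield L) (hCK : C ≤ K)
    (σ : L →+* L) (hK : ∀ x ∈ K, σ x ∈ K) (hC : ∀ x ∈ C, σ x = x)
    (Φ I χΦ χI cΦ cI d : L)
    (hχΦ : χΦ ∈ C) (hχI : χI ∈ C) (hcΦ : cΦ ∈ C) (hcI : cI ∈ C) (hd : d ∈ C)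
    (hσΦ : σ Φ = χΦ * Φ + cΦ) (hσI : σ I = χI * I + cI)
    (hne : χΦ ≠ χI) (hmem : Φ + d * I ∈ K) : Φ ∈ K := by
  set F := Φ + d * I with hF
  have hσF : σ F = χΦ * Φ + cΦ + d * (χI * I + cI) := by
    rw [hF, map_add, map_mul, hσΦ, hσI, hC d hd]
  have hσFK : σ F ∈ K := hK _ hmem
  have hkey : σ F - χI * F = (χΦ - χI) * Φ + (cΦ + d * cI) := by
    rw [hσF, hF]; ring
  have hKmem : (χΦ - χI) * Φ + (cΦ + d * cI) ∈ K := by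
    rw [← hkey]
    exact K.sub_mem hσFK (K.mul_mem (hCK hχI) hmem)
  have h2 : (χΦ - χI) * Φ ∈ K := by
    have : (χΦ - χI) * Φ = ((χΦ - χI) * Φ + (cΦ + d * cI)) - (cΦ + d * cI) := by ring
    rw [this]
    exact K.sub_mem hKmem (K.add_mem (hCK hcΦ) (K.mul_mem (hCK hd) (hCK hcI)))
  have hne' : χΦ - χI ≠ 0 := sub_ne_zero.mpr hne
  have : Φ = (χΦ - χI)⁻¹ * ((χΦ - χI) * Φ) := by
    field_simp
  rw [this]
  exact K.mul_mem (K.inv_mem (K.sub_mem (hCK hχΦ) (hCK hχI))) h2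
end

section
/- Let L be a field, K ⊆ L a subfield, C ⊆ K a subfield, and σ : L → L a ring homomorphism with σ(K) ⊆ K and σ fixing C pointwise. Let Φ, I₁, …, I_n ∈ L and χ_Φ, χ₁, …, χ_n, c_Φ, c₁, …, c_n, d₁, …, d_n ∈ C satisfy σ(Φ) = χ_Φ·Φ + c_Φ and σ(I_j) = χ_j·I_j + c_j for j = 1, …, n. If χ_Φ ∉ {χ₁, …, χ_n} and Φ + Σ_{j=1}^n d_j·I_j ∈ K, then Φ ∈ K. -/
/-- Generalisation of the character criterion: if `σ` acts affinely with character `χ_Φ`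
on `Φ` and characters `χ_j` on the `I_j`, all lying in a pointwise-fixed subfield `C ⊆ K`,
and `χ_Φ` differs from every `χ_j`, then an Ostrowski relation
`Φ + Σ d_j I_j ∈ K` forces `Φ ∈ K`. -/
theorem stmt_2 {L : Type*} [Field L] (K C : Subfield L) (hCK : C ≤ K)
    (σ : L →+* L) (hK : ∀ x ∈ K, σ x ∈ K) (hC : ∀ x ∈ C, σ x = x)
    (n : ℕ) (Φ : L) (I : Fin n → L)
    (χΦ cΦ : L) (χ c d : Fin n → L)
    (hχΦ : χΦ ∈ C) (hcΦ : cΦ ∈ C)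
    (hχ : ∀ j, χ j ∈ C) (hc : ∀ j, c j ∈ C) (hd : ∀ j, d j ∈ C)
    (hσΦ : σ Φ = χΦ * Φ + cΦ)
    (hσI : ∀ j, σ (I j) = χ j * I j + c j)
    (hne : ∀ j, χΦ ≠ χ j)
    (hmem : Φ + ∑ j, d j * I j ∈ K) : Φ ∈ K := by
  induction n with
  | zero => simpa using hmem
  | succ n ih =>
    set j₀ := Fin.last n with hj₀
    have hu0 : χΦ - χ j₀ ≠ 0 := sub_ne_zero.mpr (hne j₀)
    have huC : χΦ - χ j₀ ∈ C := C.sub_mem hχΦ (hχ j₀)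
    set u := χΦ - χ j₀ with hu
    set d' : Fin (n + 1) → L := fun j => d j * (χ j - χ j₀) / u with hd'
    have hd'C : ∀ j, d' j ∈ C := fun j =>
      C.div_mem (C.mul_mem (hd j) (C.sub_mem (hχ j) (hχ j₀))) huC
    have key : u * (Φ + ∑ j, d' j * I j)
        = σ (Φ + ∑ j, d j * I j) - χ j₀ * (Φ + ∑ j, d j * I j)
          - (cΦ + ∑ j, d j * c j) := by
      rw [map_add, hσΦ, map_sum]
      have hσdI : ∀ j : Fin (n + 1), σ (d j * I j) = d j * (χ j * I j + c j) := by
        intro j; rw [map_mul, hC _ (hd j), hσI]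
      rw [Finset.sum_congr rfl fun j _ => hσdI j]
      have step : ∀ j : Fin (n + 1),
          u * (d' j * I j)
            = (d j * (χ j * I j + c j) - χ j₀ * (d j * I j)) - d j * c j := by
        intro j
        simp only [hd']
        field_simp
        ring
      rw [mul_add, Finset.mul_sum,
        Finset.sum_congr rfl fun j _ => step j,
        Finset.sum_sub_distrib, Finset.sum_sub_distrib]
      rw [mul_add, Finset.mul_sum]
      ring
    have hmem' : Φ + ∑ j, d' j * I j ∈ K := by
      have h1 : σ (Φ + ∑ j, d j * I j) - χ j₀ * (Φ + ∑ j, d j * I j)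
          - (cΦ + ∑ j, d j * c j) ∈ K :=
        K.sub_mem (K.sub_mem (hK _ hmem) (K.mul_mem (hCK (hχ j₀)) hmem))
          (K.add_mem (hCK hcΦ)
            (K.sum_mem fun j _ => K.mul_mem (hCK (hd j)) (hCK (hc j))))
      have h2 := K.div_mem h1 (hCK huC)
      rwa [← key, mul_div_cancel_left₀ _ hu0] at h2
    have hlast : d' j₀ = 0 := by
      simp [hd']
    rw [Fin.sum_univ_castSucc, hlast, zero_mul, add_zero] at hmem'
    exact ih (fun j => I j.castSucc) (fun j => χ j.castSucc) (fun j => c j.castSucc)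
      (fun j => d' j.castSucc) (fun j => hχ _) (fun j => hc _) (fun j => hd'C _)
      (fun j => hσI _) (fun j => hne _) hmem'
end

section
/- Let e₀, e₁ ∈ ℂ with e₀ + e₁ ∉ ℤ, and let J ∈ ℂ[z] be a nonzero polynomial of degree n. Then for every nonzero polynomial R ∈ ℂ[z], T(R) is a nonzero polynomial of degree deg R + n + 1; its leading coefficient is (n − deg R − (e₀+e₁+2)) times the product of the leading coefficients of J and R. In particular, T is injective on ℂ[z]. -/
open Polynomial

/-- The operator `T(R) = z(1−z)·J·R′ + ((e₀+1 − (e₀+e₁+2)z)·J + z(z−1)·J′)·R`. -/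
noncomputable def T (e₀ e₁ : ℂ) (J R : ℂ[X]) : ℂ[X] :=
  X * (1 - X) * J * derivative R +
    ((C (e₀ + 1) - C (e₀ + e₁ + 2) * X) * J + X * (X - 1) * derivative J) * R

/-- If `e₀ + e₁ ∉ ℤ` and `J ≠ 0` has degree `n`, then for every nonzero polynomial `R`,
`T(R)` is nonzero of degree `deg R + n + 1` with leading coefficient
`(n − deg R − (e₀+e₁+2))` times the product of the leading coefficients of `J` and `R`;
in particular `T` is injective on `ℂ[z]`. -/
theorem stmt_3 (e₀ e₁ : ℂ) (hsum : ∀ m : ℤ, (m : ℂ) ≠ e₀ + e₁)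
    (J : ℂ[X]) (hJ : J ≠ 0) (n : ℕ) (hn : J.natDegree = n) :
    (∀ R : ℂ[X], R ≠ 0 →
      T e₀ e₁ J R ≠ 0 ∧
      (T e₀ e₁ J R).natDegree = R.natDegree + n + 1 ∧
      (T e₀ e₁ J R).leadingCoeff =
        ((n : ℂ) - (R.natDegree : ℂ) - (e₀ + e₁ + 2)) * (J.leadingCoeff * R.leadingCoeff)) ∧
    Function.Injective (T e₀ e₁ J) := by
  have hJl : J.leadingCoeff ≠ 0 := leadingCoeff_ne_zero.mpr hJ
  have hJn1 : J.coeff (n + 1) = 0 := coeff_eq_zero_of_natDegree_lt (by omega)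
  have hJn : J.coeff n = J.leadingCoeff := by rw [leadingCoeff, hn]
  set A : ℂ[X] := X * (1 - X) * J with hA
  set B : ℂ[X] := (C (e₀ + 1) - C (e₀ + e₁ + 2) * X) * J + X * (X - 1) * derivative J with hB
  -- facts about A
  have hAle : A.natDegree ≤ n + 2 := by
    refine (natDegree_mul_le).trans ?_
    have h1 : (X * (1 - X) : ℂ[X]).natDegree ≤ 2 := by compute_degree
    omega
  have hAc : A.coeff (n + 2) = -J.leadingCoeff := by
    have : A = X * J - X * (X * J) := by rw [hA]; ring
    rw [this, coeff_sub, coeff_X_mul, coeff_X_mul, coeff_X_mul, hJn1, hJn, zero_sub]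
  have hAdeg : A.natDegree = n + 2 :=
    natDegree_eq_of_le_of_coeff_ne_zero hAle (by rw [hAc]; simpa using hJl)
  have hAne : A ≠ 0 := fun h => by simp [h] at hAdeg
  have hAlead : A.leadingCoeff = -J.leadingCoeff := by rw [leadingCoeff, hAdeg, hAc]
  -- facts about the derivative-of-J part
  have hd1 : (X * (X - 1) * derivative J : ℂ[X]).natDegree ≤ n + 1 := by
    cases n with
    | zero =>
        obtain ⟨c, rfl⟩ := natDegree_eq_zero.mp hn
        simp
    | succ m =>
        refine (natDegree_mul_le).trans ?_
        have h1 : (X * (X - 1) : ℂ[X]).natDegree ≤ 2 := by compute_degree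
        have h2 : (derivative J).natDegree ≤ m := by
          have := natDegree_derivative_le J
          omega
        omega
  have hd2 : (X * (X - 1) * derivative J : ℂ[X]).coeff (n + 1) = (n : ℂ) * J.leadingCoeff := by
    cases n with
    | zero =>
        obtain ⟨c, rfl⟩ := natDegree_eq_zero.mp hn
        simp
    | succ m =>
        have : (X * (X - 1) * derivative J : ℂ[X]) =
            X * (X * derivative J) - X * derivative J := by ring
        rw [this, coeff_sub, coeff_X_mul, coeff_X_mul, coeff_X_mul, coeff_derivative,
          coeff_derivative]
        have hz : J.coeff (m + 1 + 1) = 0 := coeff_eq_zero_of_natDegree_lt (by omega)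
        have hl : J.coeff (m + 1) = J.leadingCoeff := by rw [leadingCoeff, hn]
        rw [hz, hl]
        push_cast
        ring
  -- facts about B
  have hBle : B.natDegree ≤ n + 1 := by
    rw [hB]
    refine (natDegree_add_le _ _).trans (max_le ?_ hd1)
    refine (natDegree_mul_le).trans ?_
    have h1 : (C (e₀ + 1) - C (e₀ + e₁ + 2) * X : ℂ[X]).natDegree ≤ 1 := by compute_degree
    omega
  have hBc : B.coeff (n + 1) = ((n : ℂ) - (e₀ + e₁ + 2)) * J.leadingCoeff := by
    have h : B = (C (e₀ + 1) * J - C (e₀ + e₁ + 2) * (X * J)) +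
        X * (X - 1) * derivative J := by rw [hB]; ring
    rw [h, coeff_add, hd2, coeff_sub, coeff_C_mul, coeff_C_mul, coeff_X_mul, hJn1, hJn]
    ring
  have hfac : ∀ d : ℕ, ((n : ℂ) - (d : ℂ) - (e₀ + e₁ + 2)) ≠ 0 := by
    intro d h
    apply hsum ((n : ℤ) - (d : ℤ) - 2)
    push_cast
    linear_combination h
  have hBdeg : B.natDegree = n + 1 :=
    natDegree_eq_of_le_of_coeff_ne_zero hBle
      (by rw [hBc]; exact mul_ne_zero (by simpa using hfac 0) hJl)
  have hBne : B ≠ 0 := fun h => by simp [h] at hBdeg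
  have hBlead : B.leadingCoeff = ((n : ℂ) - (e₀ + e₁ + 2)) * J.leadingCoeff := by
    rw [leadingCoeff, hBdeg, hBc]
  have hTdef : ∀ R : ℂ[X], T e₀ e₁ J R = A * derivative R + B * R := fun R => rfl
  -- main statement
  have main : ∀ R : ℂ[X], R ≠ 0 →
      T e₀ e₁ J R ≠ 0 ∧
      (T e₀ e₁ J R).natDegree = R.natDegree + n + 1 ∧
      (T e₀ e₁ J R).leadingCoeff =
        ((n : ℂ) - (R.natDegree : ℂ) - (e₀ + e₁ + 2)) * (J.leadingCoeff * R.leadingCoeff) := by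
    intro R hR
    have hRl : R.leadingCoeff ≠ 0 := leadingCoeff_ne_zero.mpr hR
    have hle : (T e₀ e₁ J R).natDegree ≤ R.natDegree + n + 1 := by
      rw [hTdef]
      refine (natDegree_add_le _ _).trans (max_le ?_ ?_)
      · rcases eq_or_ne (derivative R) 0 with h | h
        · rw [h, mul_zero]
          simp
        · have h0 : R.natDegree ≠ 0 := by
            intro h0
            obtain ⟨c, rfl⟩ := natDegree_eq_zero.mp h0
            simp at h
          refine (natDegree_mul_le).trans ?_
          have := natDegree_derivative_le R
          rw [hAdeg]
          omega
      · refine (natDegree_mul_le).trans ?_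
        rw [hBdeg]
        omega
    have hc : (T e₀ e₁ J R).coeff (R.natDegree + n + 1) =
        ((n : ℂ) - (R.natDegree : ℂ) - (e₀ + e₁ + 2)) * (J.leadingCoeff * R.leadingCoeff) := by
      rw [hTdef, coeff_add]
      have hBR : (B * R).coeff (R.natDegree + n + 1) = B.leadingCoeff * R.leadingCoeff := by
        have : R.natDegree + n + 1 = B.natDegree + R.natDegree := by omega
        rw [this, coeff_mul_degree_add_degree]
      cases hd : R.natDegree with
      | zero =>
          obtain ⟨c, rfl⟩ := natDegree_eq_zero.mp hd
          rw [hd] at hBR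
          rw [derivative_C, mul_zero, coeff_zero, zero_add, hBR, hBlead, leadingCoeff_C]
          push_cast
          ring
      | succ m =>
          have hdRc : (derivative R).coeff m = ((m : ℂ) + 1) * R.leadingCoeff := by
            rw [coeff_derivative]
            have : R.coeff (m + 1) = R.leadingCoeff := by rw [leadingCoeff, hd]
            rw [this]; ring
          have hdRle : (derivative R).natDegree ≤ m := by
            have := natDegree_derivative_le R
            omega
          have hdRdeg : (derivative R).natDegree = m :=
            natDegree_eq_of_le_of_coeff_ne_zero hdRle
              (by rw [hdRc]; exact mul_ne_zero (by exact_mod_cast Nat.succ_ne_zero m) hRl)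
          have hdRlead : (derivative R).leadingCoeff = ((m : ℂ) + 1) * R.leadingCoeff := by
            rw [leadingCoeff, hdRdeg, hdRc]
          rw [hd] at hBR
          have hAR : (A * derivative R).coeff (m + 1 + n + 1) =
              A.leadingCoeff * (derivative R).leadingCoeff := by
            have h : m + 1 + n + 1 = A.natDegree + (derivative R).natDegree := by
              rw [hAdeg, hdRdeg]; omega
            rw [h, coeff_mul_degree_add_degree]
          rw [hAR, hBR, hAlead, hdRlead, hBlead]
          push_cast
          ring
    have hcne : (T e₀ e₁ J R).coeff (R.natDegree + n + 1) ≠ 0 := by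
      rw [hc]
      exact mul_ne_zero (hfac _) (mul_ne_zero hJl hRl)
    have hdeg : (T e₀ e₁ J R).natDegree = R.natDegree + n + 1 :=
      natDegree_eq_of_le_of_coeff_ne_zero hle hcne
    refine ⟨fun h => hcne (by simp [h]), hdeg, ?_⟩
    rw [leadingCoeff, hdeg, hc]
  refine ⟨main, ?_⟩
  intro R S hRS
  by_contra hne
  have hsub : R - S ≠ 0 := sub_ne_zero.mpr hne
  have h0 : T e₀ e₁ J (R - S) = 0 := by
    have h1 : T e₀ e₁ J (R - S) = T e₀ e₁ J R - T e₀ e₁ J S := by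
      unfold T
      rw [derivative_sub]
      ring
    rw [h1, hRS, sub_self]
  exact (main _ hsub).1 h0
end

section
/- Let e₀, e₁ ∈ ℂ with e₀ + e₁ ∉ ℤ, and let J ∈ ℂ[z] be a nonzero polynomial of degree n. Then for every polynomial P ∈ ℂ[z] there exists a unique pair (R, Λ) of polynomials in ℂ[z] with deg Λ ≤ n such that P = T(R) + Λ. Equivalently, ℂ[z] is the direct sum of T(ℂ[z]) and the space of polynomials of degree at most n. -/
open Polynomial

noncomputable def Bop (e₀ e₁ : ℂ) (J : ℂ[X]) : ℂ[X] :=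
  (C (e₀ + 1) - C (e₀ + e₁ + 2) * X) * J + X * (X - 1) * derivative J

lemma T_zero (e₀ e₁ : ℂ) (J : ℂ[X]) : T e₀ e₁ J 0 = 0 := by simp [T]

lemma T_add (e₀ e₁ : ℂ) (J R S : ℂ[X]) :
    T e₀ e₁ J (R + S) = T e₀ e₁ J R + T e₀ e₁ J S := by
  simp only [T, derivative_add]; ring

lemma T_sub (e₀ e₁ : ℂ) (J R S : ℂ[X]) :
    T e₀ e₁ J (R - S) = T e₀ e₁ J R - T e₀ e₁ J S := by
  simp only [T, derivative_sub]; ring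

lemma T_eq (e₀ e₁ : ℂ) (J S : ℂ[X]) :
    T e₀ e₁ J S = X * (1 - X) * J * derivative S + Bop e₀ e₁ J * S := rfl

lemma B_coeff (e₀ e₁ : ℂ) (J : ℂ[X]) :
    (Bop e₀ e₁ J).coeff (J.natDegree + 1)
      = ((J.natDegree : ℂ) - e₀ - e₁ - 2) * J.leadingCoeff := by
  have hB : Bop e₀ e₁ J = C (e₀+1) * J - C (e₀+e₁+2) * (X*J)
      + (X*(X*derivative J) - X * derivative J) := by
    unfold Bop; ring
  have h1 : J.coeff (J.natDegree + 1) = 0 :=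
    coeff_eq_zero_of_natDegree_lt (Nat.lt_succ_self _)
  have e1 : (C (e₀+1) * J).coeff (J.natDegree + 1) = 0 := by
    rw [coeff_C_mul, h1, mul_zero]
  have e2 : (C (e₀+e₁+2) * (X*J)).coeff (J.natDegree + 1)
      = (e₀+e₁+2) * J.leadingCoeff := by
    rw [coeff_C_mul, coeff_X_mul]; rfl
  have e4 : (X * derivative J).coeff (J.natDegree + 1) = 0 := by
    rw [coeff_X_mul, coeff_derivative, h1, zero_mul]
  have e3 : (X*(X*derivative J)).coeff (J.natDegree + 1)
      = (J.natDegree : ℂ) * J.leadingCoeff := by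
    rw [coeff_X_mul]
    cases hn : J.natDegree with
    | zero =>
        rw [mul_coeff_zero, coeff_X_zero, zero_mul]
        simp
    | succ k =>
        rw [coeff_X_mul, coeff_derivative, leadingCoeff, hn]
        push_cast; ring
  rw [hB, coeff_add, coeff_sub, coeff_sub, e1, e2, e3, e4]
  ring

lemma B_natDegree_le (e₀ e₁ : ℂ) (J : ℂ[X]) :
    (Bop e₀ e₁ J).natDegree ≤ J.natDegree + 1 := by
  apply natDegree_add_le_of_degree_le
  · apply natDegree_mul_le.trans
    have : (C (e₀ + 1) - C (e₀ + e₁ + 2) * X).natDegree ≤ 1 := by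
      apply (natDegree_sub_le _ _).trans
      simp only [natDegree_C, max_le_iff]
      refine ⟨by omega, (natDegree_C_mul_le _ _).trans (by simp)⟩
    omega
  · by_cases hd : derivative J = 0
    · simp [hd]
    · have h1 : 1 ≤ J.natDegree := by
        by_contra h
        push_neg at h
        interval_cases h' : J.natDegree
        · exact hd (by rw [eq_C_of_natDegree_eq_zero h']; simp)
      apply natDegree_mul_le.trans
      have h2 : (derivative J).natDegree ≤ J.natDegree - 1 := natDegree_derivative_le J
      have h3 : (X * (X - 1) : ℂ[X]).natDegree ≤ 2 := by
        apply natDegree_mul_le.trans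
        have : ((X : ℂ[X]) - 1).natDegree ≤ 1 := by
          apply (natDegree_sub_le _ _).trans; simp
        simp; omega
      omega

lemma A_facts (J : ℂ[X]) (hJ : J ≠ 0) :
    (X * (1 - X) * J).natDegree = J.natDegree + 2 ∧
    (X * (1 - X) * J).leadingCoeff = -J.leadingCoeff := by
  have hq : (X * (1 - X) : ℂ[X]) = -(X^2) + X := by ring
  have h2 : (X * (1 - X) : ℂ[X]).natDegree = 2 := by
    rw [hq]
    compute_degree!
  have hlc : (X * (1 - X) : ℂ[X]).leadingCoeff = -1 := by
    rw [leadingCoeff, h2, hq]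
    simp [coeff_X]
  have hne : (X * (1 - X) : ℂ[X]) ≠ 0 := by
    intro h; rw [h] at hlc; simp at hlc
  constructor
  · rw [natDegree_mul hne hJ, h2]; ring
  · rw [leadingCoeff_mul, hlc]; ring

lemma T_natDegree_le (e₀ e₁ : ℂ) (J S : ℂ[X]) (hJ : J ≠ 0) :
    (T e₀ e₁ J S).natDegree ≤ J.natDegree + S.natDegree + 1 := by
  rw [T_eq]
  apply natDegree_add_le_of_degree_le
  · by_cases hd : derivative S = 0
    · simp [hd]
    · have h1 : 1 ≤ S.natDegree := by
        by_contra h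
        push_neg at h
        interval_cases h' : S.natDegree
        · exact hd (by rw [eq_C_of_natDegree_eq_zero h']; simp)
      apply natDegree_mul_le.trans
      have h2 : (derivative S).natDegree ≤ S.natDegree - 1 := natDegree_derivative_le S
      have h3 := (A_facts J hJ).1
      omega
  · apply natDegree_mul_le.trans
    have := B_natDegree_le e₀ e₁ J
    omega

lemma T_coeff (e₀ e₁ : ℂ) (J S : ℂ[X]) (hJ : J ≠ 0) (hS : S ≠ 0)
    (hne : ((J.natDegree : ℂ) - e₀ - e₁ - 2) ≠ 0) :
    (T e₀ e₁ J S).coeff (J.natDegree + S.natDegree + 1)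
      = ((J.natDegree : ℂ) - S.natDegree - e₀ - e₁ - 2)
        * J.leadingCoeff * S.leadingCoeff := by
  have hj : J.leadingCoeff ≠ 0 := leadingCoeff_ne_zero.mpr hJ
  have hs : S.leadingCoeff ≠ 0 := leadingCoeff_ne_zero.mpr hS
  -- degree of Bop is exactly natDegree J + 1
  have hBne : (Bop e₀ e₁ J).coeff (J.natDegree + 1) ≠ 0 := by
    rw [B_coeff]; exact mul_ne_zero hne hj
  have hBdeg : (Bop e₀ e₁ J).natDegree = J.natDegree + 1 :=
    le_antisymm (B_natDegree_le e₀ e₁ J) (le_natDegree_of_ne_zero hBne)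
  have hBS : (Bop e₀ e₁ J * S).coeff (J.natDegree + S.natDegree + 1)
      = ((J.natDegree : ℂ) - e₀ - e₁ - 2) * J.leadingCoeff * S.leadingCoeff := by
    have := coeff_mul_degree_add_degree (Bop e₀ e₁ J) S
    rw [hBdeg] at this
    rw [show J.natDegree + S.natDegree + 1 = J.natDegree + 1 + S.natDegree by ring,
      this, leadingCoeff, hBdeg, B_coeff]
  rw [T_eq, coeff_add, hBS]
  cases hd : S.natDegree with
  | zero =>
      have hS0 : derivative S = 0 := by
        rw [eq_C_of_natDegree_eq_zero hd]; simp
      rw [hS0]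
      simp
  | succ k =>
      have hS'k : (derivative S).coeff k = (k+1 : ℂ) * S.leadingCoeff := by
        rw [coeff_derivative, leadingCoeff, hd]; ring
      have hS'ne : (derivative S).coeff k ≠ 0 := by
        rw [hS'k]
        exact mul_ne_zero (Nat.cast_add_one_ne_zero k) hs
      have hS'deg : (derivative S).natDegree = k := by
        refine le_antisymm ?_ (le_natDegree_of_ne_zero hS'ne)
        have := natDegree_derivative_le S
        omega
      have hA := A_facts J hJ
      have hS'lc : (derivative S).leadingCoeff = (k+1 : ℂ) * S.leadingCoeff := by
        rw [leadingCoeff, hS'deg, hS'k]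
      have hAS : (X * (1 - X) * J * derivative S).coeff (J.natDegree + (k+1) + 1)
          = -J.leadingCoeff * ((k+1 : ℂ) * S.leadingCoeff) := by
        have h := coeff_mul_degree_add_degree (X * (1 - X) * J) (derivative S)
        rw [hA.1, hS'deg, hA.2, hS'lc] at h
        rw [show J.natDegree + (k+1) + 1 = J.natDegree + 2 + k by omega, h]
      rw [hAS]
      push_cast
      ring

/-- If `e₀ + e₁ ∉ ℤ` and `J ≠ 0` has degree `n`, then every polynomial `P` decomposes
uniquely as `P = T(R) + Λ` with `R, Λ ∈ ℂ[z]` and `deg Λ ≤ n`; i.e. `ℂ[z]` is the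
direct sum of `T(ℂ[z])` and the polynomials of degree at most `n`. -/
theorem stmt_4 (e₀ e₁ : ℂ) (hsum : ∀ m : ℤ, (m : ℂ) ≠ e₀ + e₁)
    (J : ℂ[X]) (hJ : J ≠ 0) (n : ℕ) (hn : J.natDegree = n)
    (P : ℂ[X]) :
    ∃! RΛ : ℂ[X] × ℂ[X], RΛ.2.degree ≤ (n : ℕ) ∧ P = T e₀ e₁ J RΛ.1 + RΛ.2 := by
  subst hn
  set n := J.natDegree with hn
  have hj : J.leadingCoeff ≠ 0 := leadingCoeff_ne_zero.mpr hJ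
  have hkey : ∀ d : ℕ, ((n : ℂ) - (d : ℂ) - e₀ - e₁ - 2) ≠ 0 := by
    intro d h
    apply hsum ((n : ℤ) - d - 2)
    push_cast
    linear_combination h
  have hne : ((n : ℂ) - e₀ - e₁ - 2) ≠ 0 := by
    simpa using hkey 0
  -- Existence
  have hex : ∀ N : ℕ, ∀ P : ℂ[X], P.natDegree ≤ N →
      ∃ R Λ : ℂ[X], Λ.degree ≤ (n : ℕ) ∧ P = T e₀ e₁ J R + Λ := by
    intro N
    induction N with
    | zero =>
        intro P hP
        refine ⟨0, P, ?_, by rw [T_zero, zero_add]⟩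
        exact degree_le_of_natDegree_le (by omega)
    | succ N ih =>
        intro P hP
        by_cases hPn : P.natDegree ≤ n
        · exact ⟨0, P, degree_le_of_natDegree_le hPn, by rw [T_zero, zero_add]⟩
        · push_neg at hPn
          have hP0 : P ≠ 0 := fun h => by simp [h] at hPn
          set d : ℕ := P.natDegree - n - 1 with hd
          have hdeq : P.natDegree = n + d + 1 := by omega
          set c : ℂ := P.leadingCoeff / (((n : ℂ) - d - e₀ - e₁ - 2) * J.leadingCoeff)
            with hc
          have hcne : c ≠ 0 := by
            apply div_ne_zero (leadingCoeff_ne_zero.mpr hP0)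
            exact mul_ne_zero (hkey d) hj
          set R₀ : ℂ[X] := C c * X ^ d with hR₀
          have hR₀ne : R₀ ≠ 0 := by
            simp [hR₀, hcne]
          have hR₀d : R₀.natDegree = d := natDegree_C_mul_X_pow d c hcne
          have hR₀lc : R₀.leadingCoeff = c := by
            rw [leadingCoeff, hR₀d, hR₀, coeff_C_mul, coeff_X_pow]
            simp
          have hTc : (T e₀ e₁ J R₀).coeff P.natDegree = P.leadingCoeff := by
            rw [hdeq, show n + d + 1 = n + R₀.natDegree + 1 by rw [hR₀d],
              T_coeff e₀ e₁ J R₀ hJ hR₀ne hne, hR₀d, hR₀lc, hc]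
            exact mul_div_cancel₀ _ (mul_ne_zero (hkey d) hj)
          set Q : ℂ[X] := P - T e₀ e₁ J R₀ with hQ
          have hQtop : Q.coeff P.natDegree = 0 := by
            rw [hQ, coeff_sub, hTc, leadingCoeff, sub_self]
          have hQle : Q.natDegree ≤ P.natDegree := by
            apply (natDegree_sub_le _ _).trans
            have := T_natDegree_le e₀ e₁ J R₀ hJ
            rw [hR₀d] at this
            omega
          have hQlt : Q.natDegree < P.natDegree := by
            rcases eq_or_ne Q 0 with h | h
            · rw [h]; simpa using by omega
            · rcases lt_or_eq_of_le hQle with h' | h'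
              · exact h'
              · exfalso
                apply leadingCoeff_ne_zero.mpr h
                rw [leadingCoeff, h', hQtop]
          obtain ⟨R, Λ, hΛ, hQR⟩ := ih Q (by omega)
          refine ⟨R₀ + R, Λ, hΛ, ?_⟩
          rw [T_add]
          have : P = T e₀ e₁ J R₀ + Q := by rw [hQ]; ring
          rw [this, hQR]; ring
  obtain ⟨R, Λ, hΛ, hPR⟩ := hex P.natDegree P le_rfl
  refine ⟨(R, Λ), ⟨hΛ, hPR⟩, ?_⟩
  rintro ⟨R', Λ'⟩ ⟨hΛ', hPR'⟩
  have hReq : R' = R := by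
    by_contra hne'
    have hS : R' - R ≠ 0 := sub_ne_zero.mpr hne'
    have hTS : T e₀ e₁ J (R' - R) = Λ - Λ' := by
      rw [T_sub]
      have : T e₀ e₁ J R' + Λ' = T e₀ e₁ J R + Λ := by rw [← hPR', ← hPR]
      linear_combination this
    set d := (R' - R).natDegree
    have hcoeff : (T e₀ e₁ J (R' - R)).coeff (n + d + 1) ≠ 0 := by
      rw [T_coeff e₀ e₁ J _ hJ hS hne]
      exact mul_ne_zero (mul_ne_zero (hkey d) hj) (leadingCoeff_ne_zero.mpr hS)
    apply hcoeff
    rw [hTS]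
    apply coeff_eq_zero_of_degree_lt
    apply lt_of_le_of_lt (degree_sub_le _ _)
    apply max_lt <;>
      exact lt_of_le_of_lt (by assumption) (by exact_mod_cast Nat.lt_succ_of_le (by omega))
  have hΛeq : Λ' = Λ := by
    subst hReq
    have : T e₀ e₁ J R' + Λ' = T e₀ e₁ J R' + Λ := by rw [← hPR', ← hPR]
    exact add_left_cancel this
  simp [hReq, hΛeq]
end

section
/- Let e₀, e₁ ∈ ℂ \ ℤ, and let J ∈ ℂ[z] be a squarefree nonzero polynomial with J(0) ≠ 0 and J(1) ≠ 0. If P ∈ ℂ[z] is a polynomial, R ∈ ℂ(z) is a rational function, and P = T(R), then R is a polynomial, i.e. R ∈ ℂ[z]. -/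
open Polynomial

private lemma core_5 (e₀ e₁ : ℂ)
    (he₀ : ∀ m : ℤ, (m : ℂ) ≠ e₀) (he₁ : ∀ m : ℤ, (m : ℂ) ≠ e₁)
    (J : ℂ[X]) (hsq : Squarefree J)
    (hJ0 : J.eval 0 ≠ 0) (hJ1 : J.eval 1 ≠ 0)
    (P a b : ℂ[X]) (hb : b ≠ 0) (hco : IsCoprime a b)
    (heq : P * b ^ 2 =
      X * (1 - X) * J * (derivative a * b - a * derivative b) +
        ((C (e₀ + 1) - C (e₀ + e₁ + 2) * X) * J + X * (X - 1) * derivative J) * (a * b)) :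
    IsUnit b := by
  by_contra hu
  obtain ⟨z₀, hroot⟩ : ∃ z, IsRoot b z := by
    apply IsAlgClosed.exists_root
    intro h
    exact hu (isUnit_iff_degree_eq_zero.mpr h)
  -- a does not vanish at z₀
  have ha0 : a.eval z₀ ≠ 0 := by
    obtain ⟨x, y, hxy⟩ := hco
    intro h
    have := congrArg (eval z₀) hxy
    simp [h, hroot.eq_zero] at this
  -- multiplicity
  have hk : 0 < rootMultiplicity z₀ b := (rootMultiplicity_pos hb).mpr hroot
  obtain ⟨m, hm⟩ : ∃ m, rootMultiplicity z₀ b = m + 1 :=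
    ⟨rootMultiplicity z₀ b - 1, (Nat.succ_pred_eq_of_pos hk).symm⟩
  obtain ⟨u, hbu, hund⟩ := b.exists_eq_pow_rootMultiplicity_mul_and_not_dvd hb z₀
  rw [hm] at hbu
  have hu0 : u.eval z₀ ≠ 0 := fun h => hund (dvd_iff_isRoot.mpr h)
  set d : ℂ[X] := X - C z₀ with hd
  have hd0 : d.eval z₀ = 0 := by simp [hd]
  have hdne : d ≠ 0 := X_sub_C_ne_zero z₀
  set G : ℂ[X] := X * (1 - X) * J with hG
  set Q : ℂ[X] := (C (e₀ + 1) - C (e₀ + e₁ + 2) * X) * J + X * (X - 1) * derivative J with hQ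
  set w : ℂ[X] := d * derivative a * u - C ((m + 1 : ℕ) : ℂ) * (a * u) - d * a * derivative u
    with hw
  set V : ℂ[X] := G * w + d * (Q * (a * u)) with hV
  -- derivative of b
  have hdb : derivative b = C ((m + 1 : ℕ) : ℂ) * d ^ m * u + d ^ (m + 1) * derivative u := by
    rw [hbu]
    simp [derivative_mul, derivative_pow, hd]
  -- the key polynomial identity
  have key : V = d ^ (m + 2) * (P * u ^ 2) := by
    have hcancel : d ^ m * V = d ^ m * (d ^ (m + 2) * (P * u ^ 2)) := by
      rw [hdb, hbu] at heq
      rw [hV, hw, hG, hQ]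
      linear_combination -heq
    exact mul_left_cancel₀ (pow_ne_zero m hdne) hcancel
  have hweval : w.eval z₀ = -(((m + 1 : ℕ) : ℂ) * (a.eval z₀ * u.eval z₀)) := by
    simp [hw, hd0]
  have hVeval : V.eval z₀ = 0 := by
    rw [key]
    simp [hd0, pow_succ]
  have hGw : G.eval z₀ * w.eval z₀ = 0 := by
    have := hVeval
    rw [hV] at this
    simpa [hd0] using this
  have hm1 : ((m + 1 : ℕ) : ℂ) ≠ 0 := Nat.cast_ne_zero.mpr (Nat.succ_ne_zero m)
  have hG0 : G.eval z₀ = 0 := by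
    by_contra hGne
    rw [hweval] at hGw
    exact (mul_ne_zero hGne (neg_ne_zero.mpr
      (mul_ne_zero hm1 (mul_ne_zero ha0 hu0)))) hGw
  -- G = d * s
  obtain ⟨s, hGs⟩ : d ∣ G := dvd_iff_isRoot.mpr hG0
  have hseval : s.eval z₀ = (derivative G).eval z₀ := by
    have : derivative G = s + d * derivative s := by
      rw [hGs]; simp [derivative_mul, hd]
    rw [this]
    simp [hd0]
  -- cancel one power of d
  have key2 : s * w + Q * (a * u) = d * (d ^ m * (P * u ^ 2)) := by
    have : d * (s * w + Q * (a * u)) = d * (d * (d ^ m * (P * u ^ 2))) := by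
      have := key
      rw [hV, hGs] at this
      linear_combination this
    exact mul_left_cancel₀ hdne this
  have hmain : s.eval z₀ * w.eval z₀ + Q.eval z₀ * (a.eval z₀ * u.eval z₀) = 0 := by
    have := congrArg (eval z₀) key2
    simpa [hd0] using this
  -- so Q(z₀) = (m+1) * G'(z₀)
  have hQeq : Q.eval z₀ = ((m + 1 : ℕ) : ℂ) * (derivative G).eval z₀ := by
    rw [hweval, hseval] at hmain
    have h2 : (Q.eval z₀ - ((m + 1 : ℕ) : ℂ) * (derivative G).eval z₀) *
        (a.eval z₀ * u.eval z₀) = 0 := by linear_combination hmain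
    rcases mul_eq_zero.mp h2 with h | h
    · exact sub_eq_zero.mp h
    · exact absurd h (mul_ne_zero ha0 hu0)
  -- explicit evals
  have hGeval : G.eval z₀ = z₀ * (1 - z₀) * J.eval z₀ := by simp [hG]
  have hG'eval : (derivative G).eval z₀ =
      (1 - 2 * z₀) * J.eval z₀ + z₀ * (1 - z₀) * (derivative J).eval z₀ := by
    have hdG : derivative G = (1 - 2 * X) * J + X * (1 - X) * derivative J := by
      rw [hG]
      simp only [derivative_mul, derivative_X, derivative_sub, derivative_one]
      ring
    rw [hdG]
    simp only [eval_add, eval_mul, eval_sub, eval_one, eval_X, eval_ofNat]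
  have hQeval : Q.eval z₀ = (e₀ + 1 - (e₀ + e₁ + 2) * z₀) * J.eval z₀ +
      z₀ * (z₀ - 1) * (derivative J).eval z₀ := by
    rw [hQ]
    simp only [eval_add, eval_mul, eval_sub, eval_C, eval_X, eval_one]
  rw [hGeval] at hG0
  rw [hQeval, hG'eval] at hQeq
  by_cases h0 : z₀ = 0
  · -- z₀ = 0
    subst h0
    have h3 : (e₀ + 1 - ((m + 1 : ℕ) : ℂ)) * J.eval 0 = 0 := by linear_combination hQeq
    have h4 : e₀ + 1 - ((m + 1 : ℕ) : ℂ) = 0 := (mul_eq_zero.mp h3).resolve_right hJ0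
    apply he₀ m
    push_cast at h4 ⊢
    linear_combination -h4
  by_cases h1 : z₀ = 1
  · -- z₀ = 1
    subst h1
    have h3 : (((m + 1 : ℕ) : ℂ) - e₁ - 1) * J.eval 1 = 0 := by linear_combination hQeq
    have h4 : ((m + 1 : ℕ) : ℂ) - e₁ - 1 = 0 := (mul_eq_zero.mp h3).resolve_right hJ1
    apply he₁ m
    push_cast at h4 ⊢
    linear_combination h4
  · -- J(z₀) = 0
    have hz01 : z₀ * (1 - z₀) ≠ 0 :=
      mul_ne_zero h0 (sub_ne_zero.mpr fun h => h1 h.symm)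
    have hJz : J.eval z₀ = 0 := by
      rcases mul_eq_zero.mp hG0 with h | h
      · exact absurd h hz01
      · exact h
    have hJ'z : (derivative J).eval z₀ ≠ 0 := by
      have hsep : J.Separable := PerfectField.separable_iff_squarefree.mpr hsq
      obtain ⟨x, y, hxy⟩ := hsep
      intro h
      have := congrArg (eval z₀) hxy
      simp [hJz, h] at this
    rw [hJz] at hQeq
    have h3 : (((m + 1 : ℕ) : ℂ) + 1) * (z₀ * (1 - z₀) * (derivative J).eval z₀) = 0 := by
      linear_combination -hQeq
    have hm2 : ((m + 1 : ℕ) : ℂ) + 1 ≠ 0 := by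
      have h5 : ((m + 2 : ℕ) : ℂ) ≠ 0 := Nat.cast_ne_zero.mpr (by omega)
      intro h
      apply h5
      push_cast at h ⊢
      linear_combination h
    exact (mul_ne_zero hm2 (mul_ne_zero hz01 hJ'z)) h3

/-- Rational-function version of `P = T(R)` written with `R = a/b`: if
`e₀, e₁ ∈ ℂ \ ℤ`, `J` is squarefree with `J(0) ≠ 0 ≠ J(1)`, `P` is a polynomial and the
rational function `R = a/b` satisfies `P = T(R)` (i.e. the cleared-denominator identity
`P·b² = z(1−z)·J·(a′b − ab′) + ((e₀+1 − (e₀+e₁+2)z)·J + z(z−1)·J′)·ab` holds),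
then `R` is a polynomial, i.e. `b ∣ a`. -/
theorem stmt_5 (e₀ e₁ : ℂ)
    (he₀ : ∀ m : ℤ, (m : ℂ) ≠ e₀) (he₁ : ∀ m : ℤ, (m : ℂ) ≠ e₁)
    (J : ℂ[X]) (hJ : J ≠ 0) (hsq : Squarefree J)
    (hJ0 : J.eval 0 ≠ 0) (hJ1 : J.eval 1 ≠ 0)
    (P a b : ℂ[X]) (hb : b ≠ 0)
    (heq : P * b ^ 2 =
      X * (1 - X) * J * (derivative a * b - a * derivative b) +
        ((C (e₀ + 1) - C (e₀ + e₁ + 2) * X) * J + X * (X - 1) * derivative J) * (a * b)) :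
    b ∣ a := by
  set g : ℂ[X] := GCDMonoid.gcd a b with hg
  have hgne : g ≠ 0 := gcd_ne_zero_of_right hb
  set a₁ : ℂ[X] := a / g with ha₁
  set b₁ : ℂ[X] := b / g with hb₁
  have haa : a = g * a₁ := (EuclideanDomain.mul_div_cancel' hgne (gcd_dvd_left a b)).symm
  have hbb : b = g * b₁ := (EuclideanDomain.mul_div_cancel' hgne (gcd_dvd_right a b)).symm
  have hco : IsCoprime a₁ b₁ := isCoprime_div_gcd_div_gcd hb
  have hb₁ : b₁ ≠ 0 := fun h => hb (by rw [hbb, h, mul_zero])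
  have heq₁ : P * b₁ ^ 2 =
      X * (1 - X) * J * (derivative a₁ * b₁ - a₁ * derivative b₁) +
        ((C (e₀ + 1) - C (e₀ + e₁ + 2) * X) * J + X * (X - 1) * derivative J) * (a₁ * b₁) := by
    have hcancel : (P * b₁ ^ 2) * g ^ 2 =
        (X * (1 - X) * J * (derivative a₁ * b₁ - a₁ * derivative b₁) +
          ((C (e₀ + 1) - C (e₀ + e₁ + 2) * X) * J + X * (X - 1) * derivative J) * (a₁ * b₁))
          * g ^ 2 := by
      rw [haa, hbb] at heq
      simp only [derivative_mul] at heq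
      linear_combination heq
    exact mul_right_cancel₀ (pow_ne_zero 2 hgne) hcancel
  have hunit : IsUnit b₁ := core_5 e₀ e₁ he₀ he₁ J hsq hJ0 hJ1 P a₁ b₁ hb₁ hco heq₁
  rw [haa, hbb]
  exact mul_dvd_mul_left g (hunit.dvd)
end

section
/- Let e₀, e₁ ∈ ℂ \ ℤ with e₀ + e₁ ∉ ℤ, and let J ∈ ℂ[z] be a squarefree nonzero polynomial with J(0) ≠ 0 and J(1) ≠ 0. Then T is injective on ℂ(z): if R ∈ ℂ(z) satisfies T(R) = 0, then R = 0. -/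
open Polynomial

private lemma X_mul_deriv_pow (n : ℕ) :
    (X : ℂ[X]) * derivative (X ^ n) = C (n : ℂ) * X ^ n := by
  cases n with
  | zero => simp
  | succ m =>
    rw [derivative_X_pow, pow_succ]
    push_cast
    ring

/-- Injectivity of `T` on `ℂ(z)`, written with `R = a/b` (`b ≠ 0`): if
`e₀, e₁ ∈ ℂ \ ℤ`, `e₀ + e₁ ∉ ℤ`, and `J` is squarefree nonzero with `J(0) ≠ 0 ≠ J(1)`,
then `T(R) = 0` (i.e. the cleared-denominator identity below) forces `R = 0`,
i.e. `a = 0`. -/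
theorem stmt_6 (e₀ e₁ : ℂ)
    (he₀ : ∀ m : ℤ, (m : ℂ) ≠ e₀) (he₁ : ∀ m : ℤ, (m : ℂ) ≠ e₁)
    (hsum : ∀ m : ℤ, (m : ℂ) ≠ e₀ + e₁)
    (J : ℂ[X]) (hJ : J ≠ 0) (hsq : Squarefree J)
    (hJ0 : J.eval 0 ≠ 0) (hJ1 : J.eval 1 ≠ 0)
    (a b : ℂ[X]) (hb : b ≠ 0)
    (heq : X * (1 - X) * J * (derivative a * b - a * derivative b) +
        ((C (e₀ + 1) - C (e₀ + e₁ + 2) * X) * J + X * (X - 1) * derivative J) * (a * b)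
        = 0) :
    a = 0 := by
  by_contra ha
  set α := a.rootMultiplicity 0 with hα
  set β := b.rootMultiplicity 0 with hβ
  obtain ⟨u, hu, hud⟩ := a.exists_eq_pow_rootMultiplicity_mul_and_not_dvd ha 0
  obtain ⟨v, hv, hvd⟩ := b.exists_eq_pow_rootMultiplicity_mul_and_not_dvd hb 0
  rw [map_zero, sub_zero] at hu hv hud hvd
  have hu0 : u.eval 0 ≠ 0 := by
    rwa [Polynomial.X_dvd_iff, coeff_zero_eq_eval_zero] at hud
  have hv0 : v.eval 0 ≠ 0 := by
    rwa [Polynomial.X_dvd_iff, coeff_zero_eq_eval_zero] at hvd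
  set M : ℂ[X] := (C (e₀ + 1) - C (e₀ + e₁ + 2) * X) * J + X * (X - 1) * derivative J with hM
  set Q : ℂ[X] := (C (α : ℂ) - C (β : ℂ)) * u * v + X * (derivative u * v - u * derivative v)
    with hQ
  set P : ℂ[X] := (1 - X) * J * Q + M * (u * v) with hP
  have hda : X * derivative a = (C (α : ℂ) * u + X * derivative u) * X ^ α := by
    rw [hu, derivative_mul]
    linear_combination u * X_mul_deriv_pow α
  have hdb : X * derivative b = (C (β : ℂ) * v + X * derivative v) * X ^ β := by
    rw [hv, derivative_mul]
    linear_combination v * X_mul_deriv_pow β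
  have h1 : (1 - X) * J * ((X * derivative a) * b - a * (X * derivative b)) + M * (a * b)
      = 0 := by
    rw [hM]; linear_combination heq
  rw [hda, hdb, hu, hv] at h1
  have key : (X : ℂ[X]) ^ (α + β) * P = 0 := by
    rw [hP, hQ, pow_add]
    linear_combination h1
  have hPzero : P = 0 := by
    rcases mul_eq_zero.mp key with h | h
    · exact absurd h (pow_ne_zero _ X_ne_zero)
    · exact h
  have hev := congrArg (eval 0) hPzero
  rw [hP, hQ, hM] at hev
  simp only [eval_add, eval_mul, eval_sub, eval_one, eval_X, eval_C, eval_pow] at hev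
  have hfin : ((α : ℂ) - β + (e₀ + 1)) * (J.eval 0 * (u.eval 0 * v.eval 0)) = 0 := by
    rw [eval_zero] at hev
    linear_combination hev
  have : (α : ℂ) - β + (e₀ + 1) = 0 := by
    rcases mul_eq_zero.mp hfin with h | h
    · exact h
    · rcases mul_eq_zero.mp h with h' | h'
      · exact absurd h' hJ0
      · rcases mul_eq_zero.mp h' with h'' | h''
        · exact absurd h'' hu0
        · exact absurd h'' hv0
  exact he₀ ((β : ℤ) - α - 1) (by push_cast; linear_combination -this)
end

section
/- Let e₀, e₁ ∈ ℂ \ ℤ with e₀ + e₁ ∉ ℤ, and let J ∈ ℂ[z] be a squarefree nonzero polynomial of degree n with J(0) ≠ 0 and J(1) ≠ 0. If P ∈ ℂ[z] is a polynomial with deg P ≤ n and there exists a rational function R ∈ ℂ(z) with P = T(R), then P = 0. -/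
open Polynomial


private lemma aux_root (e₀ e₁ : ℂ)
    (he₀ : ∀ m : ℤ, (m : ℂ) ≠ e₀) (he₁ : ∀ m : ℤ, (m : ℂ) ≠ e₁)
    (J : ℂ[X]) (hsq : Squarefree J)
    (hJ0 : J.eval 0 ≠ 0) (hJ1 : J.eval 1 ≠ 0)
    (P a b : ℂ[X]) (hb : b ≠ 0) (hcop : IsCoprime a b)
    (hid : P * b ^ 2 =
        X * (1 - X) * J * (derivative a * b - a * derivative b) +
          ((C (e₀ + 1) - C (e₀ + e₁ + 2) * X) * J + X * (X - 1) * derivative J) * (a * b))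
    (z₀ : ℂ) (hz : b.eval z₀ = 0) : False := by
  classical
  have hb0 : 0 < rootMultiplicity z₀ b := (rootMultiplicity_pos hb).mpr hz
  obtain ⟨m, hm⟩ : ∃ m, rootMultiplicity z₀ b = m + 1 :=
    ⟨rootMultiplicity z₀ b - 1, (Nat.succ_pred_eq_of_pos hb0).symm⟩
  obtain ⟨b₁, hbfact, hnd⟩ := b.exists_eq_pow_rootMultiplicity_mul_and_not_dvd hb z₀
  rw [hm] at hbfact
  have hb₁ : b₁.eval z₀ ≠ 0 := fun h => hnd (dvd_iff_isRoot.mpr h)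
  have ha0 : a.eval z₀ ≠ 0 := by
    obtain ⟨u, v, huv⟩ := hcop
    intro h
    have h2 := congrArg (eval z₀) huv
    simp [h, hz] at h2
  subst hbfact
  have hune : (X - C z₀ : ℂ[X]) ≠ 0 := X_sub_C_ne_zero z₀
  have hder : derivative ((X - C z₀) ^ (m + 1) * b₁)
      = (X - C z₀) ^ m * (C ((m + 1 : ℕ) : ℂ) * b₁ + (X - C z₀) * derivative b₁) := by
    rw [derivative_mul, derivative_pow, derivative_X_sub_C]
    simp only [Nat.add_sub_cancel]
    ring
  set Q : ℂ[X] := (C (e₀ + 1) - C (e₀ + e₁ + 2) * X) * J + X * (X - 1) * derivative J with hQ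
  set D : ℂ[X] := derivative a * ((X - C z₀) * b₁) -
      a * (C ((m + 1 : ℕ) : ℂ) * b₁ + (X - C z₀) * derivative b₁) with hD
  have hS : X * (1 - X) * J * D + Q * (a * ((X - C z₀) * b₁))
      = (X - C z₀) * ((X - C z₀) * ((X - C z₀) ^ m * (P * b₁ ^ 2))) := by
    apply mul_left_cancel₀ (pow_ne_zero m hune)
    rw [hder] at hid
    linear_combination -hid
  clear hid hder hnd hm hb0 hb
  by_cases hz0 : z₀ = 0
  · -- z₀ = 0
    subst hz0
    rw [map_zero, sub_zero] at hS hD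
    have hT : X * ((1 - X) * J * D + Q * (a * b₁)) = X * (X * (X ^ m * (P * b₁ ^ 2))) := by
      linear_combination hS
    have hT' := mul_left_cancel₀ (X_ne_zero (R := ℂ)) hT
    have h := congrArg (eval 0) hT'
    rw [hD, hQ] at h
    simp only [eval_add, eval_mul, eval_sub, eval_pow, eval_one, eval_X, eval_C, sub_self,
      zero_mul, mul_zero, add_zero, zero_add, sub_zero, zero_sub, mul_one, one_mul] at h
    have h2 : J.eval 0 * (a.eval 0 * b₁.eval 0) * (e₀ + 1 - ((m + 1 : ℕ) : ℂ)) = 0 := by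
      linear_combination h
    have h3 : e₀ + 1 - ((m + 1 : ℕ) : ℂ) ≠ 0 := by
      intro hh
      apply he₀ (m : ℤ)
      push_cast
      push_cast at hh
      linear_combination -hh
    exact (mul_ne_zero (mul_ne_zero hJ0 (mul_ne_zero ha0 hb₁)) h3) h2
  by_cases hz1 : z₀ = 1
  · -- z₀ = 1
    subst hz1
    rw [map_one] at hS hD
    have hT : (X - 1) * (-(X * J * D) + Q * (a * b₁))
        = (X - 1) * ((X - 1) * ((X - 1) ^ m * (P * b₁ ^ 2))) := by
      linear_combination hS
    have hX1 : (X - 1 : ℂ[X]) ≠ 0 := by rwa [map_one] at hune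
    have hT' := mul_left_cancel₀ hX1 hT
    have h := congrArg (eval 1) hT'
    rw [hD, hQ] at h
    simp only [eval_add, eval_mul, eval_sub, eval_pow, eval_one, eval_X, eval_C, sub_self,
      zero_mul, mul_zero, add_zero, zero_add, sub_zero, mul_one, one_mul, eval_neg] at h
    have h2 : J.eval 1 * (a.eval 1 * b₁.eval 1) * (((m + 1 : ℕ) : ℂ) - (e₁ + 1)) = 0 := by
      linear_combination h
    have h3 : ((m + 1 : ℕ) : ℂ) - (e₁ + 1) ≠ 0 := by
      intro hh
      apply he₁ (m : ℤ)
      push_cast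
      push_cast at hh
      linear_combination hh
    exact (mul_ne_zero (mul_ne_zero hJ1 (mul_ne_zero ha0 hb₁)) h3) h2
  by_cases hJz : J.eval z₀ = 0
  · -- z₀ is a (simple) root of J
    obtain ⟨J₁, hJfact⟩ : (X - C z₀) ∣ J := dvd_iff_isRoot.mpr hJz
    have hJ₁ : J₁.eval z₀ ≠ 0 := by
      intro h
      obtain ⟨J₂, hJ₂⟩ : (X - C z₀) ∣ J₁ := dvd_iff_isRoot.mpr h
      exact not_isUnit_X_sub_C z₀ (hsq (X - C z₀) ⟨J₂, by rw [hJfact, hJ₂]; ring⟩)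
    have hderJ : (derivative J).eval z₀ = J₁.eval z₀ := by
      rw [hJfact, derivative_mul, derivative_X_sub_C]
      simp
    have hT : (X - C z₀) * (X * (1 - X) * J₁ * D + Q * (a * b₁))
        = (X - C z₀) * ((X - C z₀) * ((X - C z₀) ^ m * (P * b₁ ^ 2))) := by
      linear_combination hS - X * (1 - X) * D * hJfact
    have hT' := mul_left_cancel₀ hune hT
    have h := congrArg (eval z₀) hT'
    rw [hD, hQ] at h
    simp only [eval_add, eval_mul, eval_sub, eval_pow, eval_one, eval_X, eval_C, sub_self,
      zero_mul, mul_zero, add_zero, zero_add, sub_zero, mul_one, one_mul, hJz, hderJ] at h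
    have h2 : z₀ * (z₀ - 1) * J₁.eval z₀ * (a.eval z₀ * b₁.eval z₀)
        * (((m + 1 : ℕ) : ℂ) + 1) = 0 := by
      linear_combination h
    have h3 : ((m + 1 : ℕ) : ℂ) + 1 ≠ 0 := by
      have : ((m + 2 : ℕ) : ℂ) ≠ 0 := Nat.cast_ne_zero.mpr (Nat.succ_ne_zero (m + 1))
      intro hh; exact this (by push_cast; push_cast at hh; linear_combination hh)
    have hz1' : z₀ - 1 ≠ 0 := sub_ne_zero.mpr hz1
    exact (mul_ne_zero (mul_ne_zero (mul_ne_zero (mul_ne_zero hz0 hz1') hJ₁)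
      (mul_ne_zero ha0 hb₁)) h3) h2
  · -- generic point
    have h := congrArg (eval z₀) hS
    rw [hD] at h
    simp only [eval_add, eval_mul, eval_sub, eval_pow, eval_one, eval_X, eval_C, sub_self,
      zero_mul, mul_zero, add_zero, zero_add, sub_zero] at h
    have h2 : z₀ * (1 - z₀) * J.eval z₀
        * (((m + 1 : ℕ) : ℂ) * (a.eval z₀ * b₁.eval z₀)) = 0 := by
      linear_combination -h
    have hm1 : ((m + 1 : ℕ) : ℂ) ≠ 0 := Nat.cast_ne_zero.mpr (Nat.succ_ne_zero m)
    have h1z : (1 : ℂ) - z₀ ≠ 0 := sub_ne_zero.mpr (fun hh => hz1 hh.symm)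
    exact (mul_ne_zero (mul_ne_zero (mul_ne_zero hz0 h1z) hJz)
      (mul_ne_zero hm1 (mul_ne_zero ha0 hb₁))) h2


private lemma Q_coeff (e₀ e₁ : ℂ) (J : ℂ[X]) :
    ((C (e₀ + 1) - C (e₀ + e₁ + 2) * X) * J + X * (X - 1) * derivative J).coeff (J.natDegree + 1)
      = ((J.natDegree : ℂ) - (e₀ + e₁ + 2)) * J.leadingCoeff := by
  have hsplit : (C (e₀ + 1) - C (e₀ + e₁ + 2) * X) * J + X * (X - 1) * derivative J
      = C (e₀ + 1) * J - C (e₀ + e₁ + 2) * (X * J) + (X * (X * derivative J) - X * derivative J) := by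
    ring
  rw [hsplit]
  rcases Nat.eq_zero_or_pos J.natDegree with h0 | hpos
  · obtain ⟨c, rfl⟩ : ∃ c, J = C c := ⟨J.coeff 0, eq_C_of_natDegree_eq_zero h0⟩
    rw [h0]
    simp only [derivative_C, mul_zero, sub_zero, coeff_add, coeff_sub, coeff_C_mul,
      coeff_X_mul, coeff_C, leadingCoeff_C, Nat.cast_zero, if_neg (Nat.succ_ne_zero 0),
      zero_add, ite_true, coeff_zero, coeff_one]
    ring
  · obtain ⟨k, hk⟩ : ∃ k, J.natDegree = k + 1 := ⟨J.natDegree - 1, (Nat.succ_pred_eq_of_pos hpos).symm⟩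
    rw [hk]
    simp only [coeff_add, coeff_sub, coeff_C_mul, coeff_X_mul]
    have h1 : J.coeff (k + 1 + 1) = 0 := coeff_eq_zero_of_natDegree_lt (by omega)
    have h2 : J.coeff (k + 1) = J.leadingCoeff := by rw [← hk]; exact coeff_natDegree
    have h3 : (derivative J).coeff (k + 1) = J.coeff (k + 1 + 1) * (k + 1 + 1 : ℕ) := by
      simpa using coeff_derivative J (k + 1)
    have h4 : (derivative J).coeff k = J.coeff (k + 1) * (k + 1 : ℕ) := by
      simpa using coeff_derivative J k
    rw [h3, h4, h1, h2]
    push_cast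
    ring


private lemma Q_deg_le (e₀ e₁ : ℂ) (J : ℂ[X]) :
    ((C (e₀ + 1) - C (e₀ + e₁ + 2) * X) * J + X * (X - 1) * derivative J).natDegree
      ≤ J.natDegree + 1 := by
  apply (natDegree_add_le _ _).trans
  apply max_le
  · apply natDegree_mul_le.trans
    have hlin : (C (e₀ + 1) - C (e₀ + e₁ + 2) * X).natDegree ≤ 1 := by compute_degree
    omega
  · rcases Nat.eq_zero_or_pos J.natDegree with h0 | hpos
    · rw [derivative_of_natDegree_zero h0, mul_zero]
      simp
    · apply natDegree_mul_le.trans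
      have h1 : (X * (X - 1) : ℂ[X]).natDegree ≤ 2 := by compute_degree
      have h2 : (derivative J).natDegree ≤ J.natDegree - 1 := natDegree_derivative_le J
      omega

private lemma key (e₀ e₁ : ℂ)
    (he₀ : ∀ m : ℤ, (m : ℂ) ≠ e₀) (he₁ : ∀ m : ℤ, (m : ℂ) ≠ e₁)
    (hsum : ∀ m : ℤ, (m : ℂ) ≠ e₀ + e₁)
    (J : ℂ[X]) (hJ : J ≠ 0) (hsq : Squarefree J)
    (hJ0 : J.eval 0 ≠ 0) (hJ1 : J.eval 1 ≠ 0)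
    (P : ℂ[X]) (hP : P.natDegree ≤ J.natDegree)
    (a b : ℂ[X]) (hb : b ≠ 0) (hcop : IsCoprime a b)
    (hid : P * b ^ 2 =
        X * (1 - X) * J * (derivative a * b - a * derivative b) +
          ((C (e₀ + 1) - C (e₀ + e₁ + 2) * X) * J + X * (X - 1) * derivative J) * (a * b)) :
    P = 0 := by
  have hroot : ∀ z₀ : ℂ, b.eval z₀ ≠ 0 := fun z₀ hz =>
    aux_root e₀ e₁ he₀ he₁ J hsq hJ0 hJ1 P a b hb hcop hid z₀ hz
  have hbdeg : b.degree ≤ 0 := by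
    by_contra hd
    push_neg at hd
    obtain ⟨z, hz⟩ := Complex.exists_root hd
    exact hroot z hz
  have hbC : b = C (b.coeff 0) := eq_C_of_degree_le_zero hbdeg
  set c := b.coeff 0 with hcdef
  have hc : c ≠ 0 := fun h => hb (by rw [hbC, h, map_zero])
  rw [hbC, derivative_C] at hid
  have hfin : C c * P = X * (1 - X) * J * derivative a +
      ((C (e₀ + 1) - C (e₀ + e₁ + 2) * X) * J + X * (X - 1) * derivative J) * a := by
    apply mul_left_cancel₀ (C_ne_zero.mpr hc)
    linear_combination hid
  set Q : ℂ[X] := (C (e₀ + 1) - C (e₀ + e₁ + 2) * X) * J + X * (X - 1) * derivative J with hQ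
  by_cases ha : a = 0
  · rw [ha] at hfin
    simp only [derivative_zero, mul_zero, add_zero, zero_add] at hfin
    rcases mul_eq_zero.mp hfin with h | h
    · exact absurd h (C_ne_zero.mpr hc)
    · exact h
  · exfalso
    have hlcJ : J.leadingCoeff ≠ 0 := leadingCoeff_ne_zero.mpr hJ
    have hlca : a.leadingCoeff ≠ 0 := leadingCoeff_ne_zero.mpr ha
    rcases Nat.eq_zero_or_pos a.natDegree with ha0 | hapos
    · -- a constant
      have hα : a = C (a.coeff 0) := eq_C_of_natDegree_eq_zero ha0
      have hα0 : a.coeff 0 ≠ 0 := fun h => ha (by rw [hα, h, map_zero])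
      have h : (C c * P).coeff (J.natDegree + 1)
          = (X * (1 - X) * J * derivative a + Q * a).coeff (J.natDegree + 1) := by rw [hfin]
      rw [hα, derivative_C, mul_zero, zero_add] at h
      rw [coeff_C_mul, coeff_mul_C, coeff_eq_zero_of_natDegree_lt (hP.trans_lt (lt_add_one _)),
        mul_zero, Q_coeff] at h
      have hne : ((J.natDegree : ℂ) - (e₀ + e₁ + 2)) ≠ 0 := by
        intro hh
        apply hsum ((J.natDegree : ℤ) - 2)
        push_cast
        linear_combination hh
      exact (mul_ne_zero (mul_ne_zero hne hlcJ) hα0) h.symm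
    · -- a nonconstant
      obtain ⟨d, hd⟩ : ∃ d, a.natDegree = d + 1 :=
        ⟨a.natDegree - 1, (Nat.succ_pred_eq_of_pos hapos).symm⟩
      have hda' : (derivative a).natDegree = d := by
        apply natDegree_eq_of_degree_eq_some
        rw [degree_derivative_eq a hapos, hd]
        norm_num
      have hlead' : (derivative a).leadingCoeff = ((d : ℂ) + 1) * a.leadingCoeff := by
        rw [leadingCoeff, hda', coeff_derivative, ← hd, coeff_natDegree]
        ring
      have hne : ((J.natDegree : ℂ) - (e₀ + e₁ + 2) - ((d : ℂ) + 1)) ≠ 0 := by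
        intro hh
        apply hsum ((J.natDegree : ℤ) - (d : ℤ) - 3)
        push_cast
        linear_combination hh
      have hQd : Q.natDegree = J.natDegree + 1 := by
        refine le_antisymm (Q_deg_le e₀ e₁ J) (le_natDegree_of_ne_zero ?_)
        rw [hQ, Q_coeff]
        refine mul_ne_zero ?_ hlcJ
        intro hh
        apply hsum ((J.natDegree : ℤ) - 2)
        push_cast
        linear_combination hh
      have hQlc : Q.leadingCoeff = ((J.natDegree : ℂ) - (e₀ + e₁ + 2)) * J.leadingCoeff := by
        rw [leadingCoeff, hQd, hQ, Q_coeff]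
      have h : (C c * P).coeff (J.natDegree + 1 + a.natDegree)
          = (X * (1 - X) * J * derivative a + Q * a).coeff (J.natDegree + 1 + a.natDegree) := by
        rw [hfin]
      have hre : X * (1 - X) * J * derivative a
          = X * (J * derivative a) - X * (X * (J * derivative a)) := by ring
      rw [hre, coeff_C_mul, coeff_add, coeff_sub] at h
      have c0 : P.coeff (J.natDegree + 1 + a.natDegree) = 0 :=
        coeff_eq_zero_of_natDegree_lt (by omega)
      have c1 : (X * (J * derivative a)).coeff (J.natDegree + 1 + a.natDegree) = 0 := by
        have hidx : J.natDegree + 1 + a.natDegree = (J.natDegree + a.natDegree) + 1 := by omega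
        rw [hidx, coeff_X_mul]
        apply coeff_eq_zero_of_natDegree_lt
        apply natDegree_mul_le.trans_lt
        omega
      have c2 : (X * (X * (J * derivative a))).coeff (J.natDegree + 1 + a.natDegree)
          = J.leadingCoeff * (derivative a).leadingCoeff := by
        have hidx : J.natDegree + 1 + a.natDegree = ((J.natDegree + d) + 1) + 1 := by omega
        rw [hidx, coeff_X_mul, coeff_X_mul, ← hda', coeff_mul_degree_add_degree]
      have c3 : (Q * a).coeff (J.natDegree + 1 + a.natDegree)
          = Q.leadingCoeff * a.leadingCoeff := by
        rw [← hQd, coeff_mul_degree_add_degree]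
      rw [c0, c1, c2, c3, hlead', hQlc, mul_zero] at h
      have hfinal : ((J.natDegree : ℂ) - (e₀ + e₁ + 2) - ((d : ℂ) + 1))
          * (J.leadingCoeff * a.leadingCoeff) = 0 := by
        linear_combination -h
      exact (mul_ne_zero hne (mul_ne_zero hlcJ hlca)) hfinal

/-- If `e₀, e₁ ∈ ℂ \ ℤ`, `e₀ + e₁ ∉ ℤ`, `J` is squarefree nonzero of degree `n` with
`J(0) ≠ 0 ≠ J(1)`, and `P` is a polynomial of degree at most `n` lying in the image of
`T` on rational functions (written with `R = a/b`, `b ≠ 0`, via the cleared-denominator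
identity), then `P = 0`. -/
theorem stmt_7 (e₀ e₁ : ℂ)
    (he₀ : ∀ m : ℤ, (m : ℂ) ≠ e₀) (he₁ : ∀ m : ℤ, (m : ℂ) ≠ e₁)
    (hsum : ∀ m : ℤ, (m : ℂ) ≠ e₀ + e₁)
    (J : ℂ[X]) (hJ : J ≠ 0) (hsq : Squarefree J)
    (hJ0 : J.eval 0 ≠ 0) (hJ1 : J.eval 1 ≠ 0)
    (n : ℕ) (hn : J.natDegree = n)
    (P : ℂ[X]) (hP : P.natDegree ≤ n)
    (hPT : ∃ a b : ℂ[X], b ≠ 0 ∧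
      P * b ^ 2 =
        X * (1 - X) * J * (derivative a * b - a * derivative b) +
          ((C (e₀ + 1) - C (e₀ + e₁ + 2) * X) * J + X * (X - 1) * derivative J) * (a * b)) :
    P = 0 := by
  subst hn
  obtain ⟨a, b, hb, hid⟩ := hPT
  have hgne : GCDMonoid.gcd a b ≠ 0 := gcd_ne_zero_of_right hb
  have ha : a = GCDMonoid.gcd a b * (a / GCDMonoid.gcd a b) :=
    (EuclideanDomain.mul_div_cancel' hgne (gcd_dvd_left a b)).symm
  have hbe : b = GCDMonoid.gcd a b * (b / GCDMonoid.gcd a b) :=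
    (EuclideanDomain.mul_div_cancel' hgne (gcd_dvd_right a b)).symm
  have hcop : IsCoprime (a / GCDMonoid.gcd a b) (b / GCDMonoid.gcd a b) :=
    isCoprime_div_gcd_div_gcd hb
  have hbne : b / GCDMonoid.gcd a b ≠ 0 := right_div_gcd_ne_zero hb
  set g := GCDMonoid.gcd a b with hg
  set a₁ := a / g with ha₁
  set b₁ := b / g with hb₁'
  have hid₁ : P * b₁ ^ 2 =
      X * (1 - X) * J * (derivative a₁ * b₁ - a₁ * derivative b₁) +
        ((C (e₀ + 1) - C (e₀ + e₁ + 2) * X) * J + X * (X - 1) * derivative J) * (a₁ * b₁) := by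
    apply mul_left_cancel₀ (pow_ne_zero 2 hgne)
    rw [ha, hbe] at hid
    simp only [derivative_mul] at hid
    linear_combination hid
  exact key e₀ e₁ he₀ he₁ hsum J hJ hsq hJ0 hJ1 P hP a₁ b₁ hbne hcop hid₁
end

section
/- Let e₀, e₁ ∈ ℂ, let J ∈ ℂ[z] be a nonzero polynomial, and let Ω(w) = w^{e₀}·(1−w)^{e₁} be defined via the principal branch of the complex power, which is analytic on ℂ with the rays (−∞,0] and [1,+∞) removed. Let c ∈ ℂ and ρ > 0 be such that every point w of the circle |w − c| = ρ satisfies w ∉ (−∞,0], w ∉ [1,+∞) and J(w) ≠ 0. Then for every polynomial R ∈ ℂ[z], the circle integral ∮_{|w−c|=ρ} T(R)(w)·Ω(w)/J(w)² dw = 0. -/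
open Polynomial

lemma Complex.one_sub_mem_slitPlane_iff {w : ℂ} :
    1 - w ∈ Complex.slitPlane ↔ w.im ≠ 0 ∨ w.re < 1 := by
  simp [Complex.mem_slitPlane_iff, sub_pos, or_comm]

lemma hasDerivAt_cpow_add_one_mul_one_sub_cpow_add_one (a b : ℂ) {w : ℂ}
    (hw : w ∈ Complex.slitPlane) (hw' : 1 - w ∈ Complex.slitPlane) :
    HasDerivAt (fun z : ℂ => z ^ (a + 1) * (1 - z) ^ (b + 1))
      (((a + 1) * (1 - w) - (b + 1) * w) * (w ^ a * (1 - w) ^ b)) w := by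
  have hpow₀ : HasDerivAt (fun z : ℂ => z ^ (a + 1)) ((a + 1) * w ^ a) w := by
    simpa using (hasDerivAt_id w).cpow_const (c := a + 1) hw
  have hpow₁ : HasDerivAt (fun z : ℂ => (1 - z) ^ (b + 1)) (-((b + 1) * (1 - w) ^ b)) w := by
    simpa using ((hasDerivAt_id w).const_sub 1).cpow_const (c := b + 1) hw'
  refine (hpow₀.mul hpow₁).congr_deriv ?_
  rw [Complex.cpow_add _ _ (Complex.slitPlane_ne_zero hw),
    Complex.cpow_add _ _ (Complex.slitPlane_ne_zero hw'), Complex.cpow_one, Complex.cpow_one]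
  ring

lemma hasDerivAt_primitive_T (e₀ e₁ : ℂ) (J R : ℂ[X]) {w : ℂ}
    (hw : w ∈ Complex.slitPlane) (hw' : 1 - w ∈ Complex.slitPlane) (hJw : J.eval w ≠ 0) :
    HasDerivAt (fun z : ℂ => R.eval z * (z ^ (e₀ + 1) * (1 - z) ^ (e₁ + 1)) / J.eval z)
      ((T e₀ e₁ J R).eval w * (w ^ e₀ * (1 - w) ^ e₁) / (J.eval w) ^ 2) w := by
  refine ((R.hasDerivAt w).mul
    (hasDerivAt_cpow_add_one_mul_one_sub_cpow_add_one e₀ e₁ hw hw')).div (J.hasDerivAt w) hJw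
    |>.congr_deriv ?_
  simp only [T, Pi.mul_apply, eval_add, eval_mul, eval_sub, eval_one, eval_X, eval_C]
  rw [Complex.cpow_add _ _ (Complex.slitPlane_ne_zero hw),
    Complex.cpow_add _ _ (Complex.slitPlane_ne_zero hw'), Complex.cpow_one, Complex.cpow_one]
  ring

theorem stmt_13_general (e₀ e₁ : ℂ) (J : ℂ[X]) (c : ℂ) (ρ : ℝ) (hρ : 0 < ρ)
    (hcirc : ∀ w : ℂ, ‖w - c‖ = ρ →
      (w.im ≠ 0 ∨ 0 < w.re) ∧ (w.im ≠ 0 ∨ w.re < 1) ∧ J.eval w ≠ 0) :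
    ∀ R : ℂ[X],
      (∮ w in C(c, ρ), (T e₀ e₁ J R).eval w * (w ^ e₀ * (1 - w) ^ e₁) / (J.eval w) ^ 2)
        = 0 := by
  intro R
  refine circleIntegral.integral_eq_zero_of_hasDerivWithinAt
    (f := fun z => R.eval z * (z ^ (e₀ + 1) * (1 - z) ^ (e₁ + 1)) / J.eval z) hρ.le fun w hw => ?_
  obtain ⟨hw₀, hw₁, hJw⟩ := hcirc w (mem_sphere_iff_norm.1 hw)
  exact (hasDerivAt_primitive_T e₀ e₁ J R (Complex.mem_slitPlane_iff.2 hw₀.symm)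
    (Complex.one_sub_mem_slitPlane_iff.2 hw₁) hJw).hasDerivWithinAt

/-- If every point `w` of the circle `|w − c| = ρ` avoids the rays `(−∞,0]` and
`[1,+∞)` and the zeros of `J`, then for every polynomial `R` the circle integral of
`T(R)(w)·w^{e₀}·(1−w)^{e₁}/J(w)²` (principal branch powers) vanishes. -/
theorem stmt_13 (e₀ e₁ : ℂ) (J : ℂ[X]) (hJ : J ≠ 0) (c : ℂ) (ρ : ℝ) (hρ : 0 < ρ)
    (hcirc : ∀ w : ℂ, ‖w - c‖ = ρ →
      (w.im ≠ 0 ∨ 0 < w.re) ∧ (w.im ≠ 0 ∨ w.re < 1) ∧ J.eval w ≠ 0) :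
    ∀ R : ℂ[X],
      (∮ w in C(c, ρ), (T e₀ e₁ J R).eval w * (w ^ e₀ * (1 - w) ^ e₁) / (J.eval w) ^ 2)
        = 0 :=
  stmt_13_general e₀ e₁ J c ρ hρ hcirc
end

section
/- Let F be a differential field containing ℂ in its constants, and let z ∈ F be transcendental over ℂ with z′ = 1; write K₀ = ℂ(z) ⊆ F for the subfield generated by ℂ and z (a differential subfield). Let e₀, e₁ ∈ ℂ, let P, J ∈ ℂ[X] with J ≠ 0 and J(z) ≠ 0 in F, and let Ω ∈ F be nonzero with z(z−1)·Ω′ = (e₀·(z−1) + e₁·z)·Ω. Suppose Γ ∈ F satisfies J(z)²·Γ′ = P(z)·Ω, and that Γ = Σ_{s=0}^{d−1} R_s·Ω^s for some d ≥ 2 and R_s ∈ K₀, where 1, Ω, …, Ω^{d−1} are linearly independent over K₀. Then there exists R₁ ∈ K₀ such that P(z)·z(z−1) = J(z)²·(z(z−1)·R₁′ + (e₀·(z−1) + e₁·z)·R₁). -/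
open Polynomial

/-!
Write `L = e₀(z−1) + e₁z`. The Kummer equation gives `z(z−1)(Ωˢ)′ = s·L·Ωˢ`, so differentiating
`Γ = Σ R_s Ωˢ` term by term yields `z(z−1)Γ′ = Σ (z(z−1)R_s′ + s·L·R_s) Ωˢ`, whose coefficients
lie in `K₀ = ℂ(z)` because `K₀` is closed under `′` (as `z′ = 1`). Multiplying by `J(z)²` and
comparing with `P(z)·z(z−1)·Ω`, linear independence of the powers of `Ω` over `K₀` identifies the
coefficients of `Ω¹`: this is the claimed identity with `R₁` the coefficient of `Ω` in `Γ`.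
-/

def Derivation.ofLeibniz {R A : Type*} [CommSemiring R] [CommRing A] [Algebra R A] (D : A → A)
    (hadd : ∀ a b, D (a + b) = D a + D b) (hmul : ∀ a b, D (a * b) = D a * b + a * D b)
    (hconst : ∀ r : R, D (algebraMap R A r) = 0) : Derivation R A A :=
  Derivation.mk'
    { toFun := D
      map_add' := hadd
      map_smul' := fun r a => by
        rw [RingHom.id_apply, Algebra.smul_def, hmul, hconst, zero_mul, zero_add,
          ← Algebra.smul_def] }
    fun a b => by rw [LinearMap.coe_mk, AddHom.coe_mk, hmul, smul_eq_mul, smul_eq_mul]; ring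

@[simp]
theorem Derivation.coe_ofLeibniz {R A : Type*} [CommSemiring R] [CommRing A] [Algebra R A]
    (D : A → A) (hadd : ∀ a b, D (a + b) = D a + D b)
    (hmul : ∀ a b, D (a * b) = D a * b + a * D b) (hconst : ∀ r : R, D (algebraMap R A r) = 0) :
    ⇑(Derivation.ofLeibniz D hadd hmul hconst) = D :=
  rfl

theorem Derivation.apply_mem_adjoin {K L : Type*} [Field K] [Field L] [Algebra K L]
    (D : Derivation K L L) {S : Set L} (hS : ∀ x ∈ S, D x ∈ IntermediateField.adjoin K S)
    {x : L} (hx : x ∈ IntermediateField.adjoin K S) : D x ∈ IntermediateField.adjoin K S := by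
  induction hx using IntermediateField.adjoin_induction with
  | mem x hx => exact hS x hx
  | algebraMap r => rw [D.map_algebraMap]; exact zero_mem _
  | add x y _ _ hx hy => rw [map_add]; exact add_mem hx hy
  | inv x hx ihx =>
    rw [D.leibniz_inv, smul_eq_mul, neg_mul]
    exact neg_mem (mul_mem (pow_mem (inv_mem hx) 2) ihx)
  | mul x y hx hy ihx ihy =>
    rw [D.leibniz, smul_eq_mul, smul_eq_mul]
    exact add_mem (mul_mem hx ihy) (mul_mem hy ihx)

theorem Derivation.mul_apply_pow_of_mul_apply_eq {R A : Type*} [CommSemiring R] [CommRing A]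
    [Algebra R A] (D : Derivation R A A) {a b Ω : A} (h : a * D Ω = b * Ω) (n : ℕ) :
    a * D (Ω ^ n) = n * b * Ω ^ n := by
  induction n with
  | zero => simp
  | succ n ih =>
    rw [pow_succ, D.leibniz, smul_eq_mul, smul_eq_mul]
    push_cast
    linear_combination Ω * ih + Ω ^ n * h

theorem Derivation.mul_apply_sum_mul_pow {R A : Type*} [CommSemiring R] [CommRing A]
    [Algebra R A] (D : Derivation R A A) {a b Ω : A} (h : a * D Ω = b * Ω) {d : ℕ}
    (c : Fin d → A) :
    a * D (∑ s, c s * Ω ^ (s : ℕ)) = ∑ s, (a * D (c s) + s * b * c s) * Ω ^ (s : ℕ) := by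
  rw [map_sum, Finset.mul_sum]
  refine Finset.sum_congr rfl fun s _ => ?_
  rw [D.leibniz, smul_eq_mul, smul_eq_mul]
  linear_combination c s * D.mul_apply_pow_of_mul_apply_eq h s

theorem LinearIndependent.coeff_eq_of_sum_mul_eq {k F ι : Type*} [Field k] [Field F]
    [Algebra k F] [Fintype ι] {K : IntermediateField k F} {v : ι → F}
    (hv : LinearIndependent K v) {c : ι → F} (hc : ∀ i, c i ∈ K) {b : F} (hb : b ∈ K) (j : ι)
    (h : ∑ i, c i * v i = b * v j) : c j = b := by
  classical
  have hsum : ∑ i, (⟨c i, hc i⟩ : K) • v i = ∑ i, (Pi.single j ⟨b, hb⟩ : ι → K) i • v i := by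
    simpa [Pi.single_apply, Algebra.smul_def, apply_ite Subtype.val, ite_mul] using h
  simpa using congrArg Subtype.val (Fintype.linearIndependent_iffₛ.mp hv _ _ hsum j)

theorem stmt_14_general {F : Type*} [Field F] [Algebra ℂ F] (D : F → F)
    (hadd : ∀ a b : F, D (a + b) = D a + D b)
    (hmul : ∀ a b : F, D (a * b) = D a * b + a * D b)
    (hconst : ∀ w : ℂ, D (algebraMap ℂ F w) = 0)
    (z : F) (hDz : D z = 1)
    (e₀ e₁ : ℂ) (P J : ℂ[X])
    (Ω : F)
    (hΩde : z * (z - 1) * D Ω =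
      (algebraMap ℂ F e₀ * (z - 1) + algebraMap ℂ F e₁ * z) * Ω)
    (Γ : F)
    (hΓ : (Polynomial.aeval z J) ^ 2 * D Γ = Polynomial.aeval z P * Ω)
    (d : ℕ) (hd : 2 ≤ d) (R : Fin d → F)
    (hR : ∀ s, R s ∈ IntermediateField.adjoin ℂ ({z} : Set F))
    (hΓeq : Γ = ∑ s : Fin d, R s * Ω ^ (s : ℕ))
    (hLI : LinearIndependent (IntermediateField.adjoin ℂ ({z} : Set F))
      (fun s : Fin d => Ω ^ (s : ℕ))) :
    ∃ R₁ : F, R₁ ∈ IntermediateField.adjoin ℂ ({z} : Set F) ∧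
      Polynomial.aeval z P * (z * (z - 1)) =
        (Polynomial.aeval z J) ^ 2 *
          (z * (z - 1) * D R₁ +
            (algebraMap ℂ F e₀ * (z - 1) + algebraMap ℂ F e₁ * z) * R₁) := by
  set K₀ := IntermediateField.adjoin ℂ ({z} : Set F)
  set L := algebraMap ℂ F e₀ * (z - 1) + algebraMap ℂ F e₁ * z
  set D' := Derivation.ofLeibniz D hadd hmul hconst
  have hzK : z ∈ K₀ := IntermediateField.mem_adjoin_simple_self ℂ z
  have hzzK : z * (z - 1) ∈ K₀ := mul_mem hzK (sub_mem hzK (one_mem _))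
  have hDK : ∀ x ∈ K₀, D x ∈ K₀ := fun x hx =>
    D'.apply_mem_adjoin (fun y hy => by simp [Set.mem_singleton_iff.mp hy, D', hDz, one_mem]) hx
  have haevalK : ∀ Q : ℂ[X], aeval z Q ∈ K₀ := fun Q =>
    IntermediateField.algebra_adjoin_le_adjoin ℂ _ (aeval_mem_adjoin_singleton ℂ z)
  have hLK : L ∈ K₀ := add_mem (mul_mem (K₀.algebraMap_mem e₀) (sub_mem hzK (one_mem _)))
    (mul_mem (K₀.algebraMap_mem e₁) hzK)
  have hDΓ := D'.mul_apply_sum_mul_pow hΩde R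
  rw [← hΓeq] at hDΓ
  simp only [D', Derivation.coe_ofLeibniz] at hDΓ
  have hsum : ∑ s, aeval z J ^ 2 * (z * (z - 1) * D (R s) + s * L * R s) * Ω ^ (s : ℕ)
      = aeval z P * (z * (z - 1)) * Ω ^ ((⟨1, hd⟩ : Fin d) : ℕ) :=
    calc _ = aeval z J ^ 2 * (z * (z - 1) * D Γ) := by
          rw [hDΓ, Finset.mul_sum]; exact Finset.sum_congr rfl fun s _ => by ring
      _ = _ := by linear_combination z * (z - 1) * hΓ
  have hcoeff := hLI.coeff_eq_of_sum_mul_eq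
    (fun s => mul_mem (pow_mem (haevalK J) 2) (add_mem (mul_mem hzzK (hDK _ (hR s)))
      (mul_mem (mul_mem (natCast_mem _ _) hLK) (hR s))))
    (mul_mem (haevalK P) hzzK) ⟨1, hd⟩ hsum
  exact ⟨R ⟨1, hd⟩, hR _, by simpa using hcoeff.symm⟩

/-- If `Γ = Σ R_s Ω^s` (with `R_s ∈ K₀ = ℂ(z)`, the powers `1, Ω, …, Ω^{d−1}` linearly
independent over `K₀`) satisfies `J(z)²·Γ′ = P(z)·Ω` where `Ω` is a Kummer element with
`z(z−1)Ω′ = (e₀(z−1) + e₁z)Ω`, then `P = T(R₁)` for some `R₁ ∈ K₀`, in the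
cleared-denominator form
`P(z)·z(z−1) = J(z)²·(z(z−1)·R₁′ + (e₀(z−1) + e₁z)·R₁)`. -/
theorem stmt_14 {F : Type*} [Field F] [Algebra ℂ F] (D : F → F)
    (hadd : ∀ a b : F, D (a + b) = D a + D b)
    (hmul : ∀ a b : F, D (a * b) = D a * b + a * D b)
    (hconst : ∀ w : ℂ, D (algebraMap ℂ F w) = 0)
    (z : F) (hz : Transcendental ℂ z) (hDz : D z = 1)
    (e₀ e₁ : ℂ) (P J : ℂ[X]) (hJ : J ≠ 0) (hJz : Polynomial.aeval z J ≠ 0)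
    (Ω : F) (hΩ : Ω ≠ 0)
    (hΩde : z * (z - 1) * D Ω =
      (algebraMap ℂ F e₀ * (z - 1) + algebraMap ℂ F e₁ * z) * Ω)
    (Γ : F)
    (hΓ : (Polynomial.aeval z J) ^ 2 * D Γ = Polynomial.aeval z P * Ω)
    (d : ℕ) (hd : 2 ≤ d) (R : Fin d → F)
    (hR : ∀ s, R s ∈ IntermediateField.adjoin ℂ ({z} : Set F))
    (hΓeq : Γ = ∑ s : Fin d, R s * Ω ^ (s : ℕ))
    (hLI : LinearIndependent (IntermediateField.adjoin ℂ ({z} : Set F))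
      (fun s : Fin d => Ω ^ (s : ℕ))) :
    ∃ R₁ : F, R₁ ∈ IntermediateField.adjoin ℂ ({z} : Set F) ∧
      Polynomial.aeval z P * (z * (z - 1)) =
        (Polynomial.aeval z J) ^ 2 *
          (z * (z - 1) * D R₁ +
            (algebraMap ℂ F e₀ * (z - 1) + algebraMap ℂ F e₁ * z) * R₁) :=
  stmt_14_general D hadd hmul hconst z hDz e₀ e₁ P J Ω hΩde Γ hΓ d hd R hR hΓeq hLI
end

section
/- Let k be a nonzero integer, λ ∈ ℝ, t₀ ∈ ℝ, and let U be an open neighborhood of t₀. Let φ, φ₁, φ₂ : U → ℝ satisfy, for all t ∈ U: φ(t) ≠ 0, φ has derivative φ₁(t) at t, φ₁ has derivative φ₂(t) at t, φ₁(t)² = (2/k)·(1 − φ(t)^k), and φ₂(t) = −φ(t)^{k−1}. Set z₀ = φ(t₀)^k. Let V be an open neighborhood of z₀ with φ(t)^k ∈ V for all t ∈ U, and let X, X₁ : V → ℝ be such that X has derivative X₁(z) at every z ∈ V and X₁ has derivative X₂ at z₀. If the composite x(t) = X(φ(t)^k) is twice differentiable at t₀ with second derivative equal to −λ·φ(t₀)^{k−2}·x(t₀),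 then 2k·z₀·(1−z₀)·X₂ + (2(k−1)(1−z₀) − k·z₀)·X₁(z₀) + λ·X(z₀) = 0. -/
/-!
Write `z = φ^k`, so `x = X ∘ z` and, by the chain rule twice,
`ẍ = X″(z) ż² + X′(z) z̈` with `ż = k φ^{k-1} φ̇` and
`z̈ = k((k-1) φ^{k-2} φ̇² + φ^{k-1} φ̈)`. Substituting the energy relation `k φ̇² = 2(1 - φ^k)`
and Newton's equation `φ̈ = -φ^{k-1}` turns every term of `ẍ + λ φ^{k-2} x = 0` into a multiple
of `φ^{k-2} ≠ 0`; dividing it out leaves the hypergeometric-type equation in `z`.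
-/

open Filter Topology

theorem HasDerivAt.zpow_of_ne_zero {f : ℝ → ℝ} {f' x : ℝ} (m : ℤ) (hf : HasDerivAt f f' x)
    (hx : f x ≠ 0) : HasDerivAt (fun t => f t ^ m) (m * f x ^ (m - 1) * f') x :=
  (hasDerivAt_zpow m (f x) (Or.inl hx)).comp x hf

theorem hasDerivAt_of_eventually_hasDerivAt_comp {X X₁ z z₁ x₁ : ℝ → ℝ} {X₂ z₂ t₀ : ℝ}
    (hz : ∀ᶠ t in 𝓝 t₀, HasDerivAt z (z₁ t) t) (hz₁ : HasDerivAt z₁ z₂ t₀)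
    (hX : ∀ᶠ t in 𝓝 t₀, HasDerivAt X (X₁ (z t)) (z t)) (hX₁ : HasDerivAt X₁ X₂ (z t₀))
    (hx : ∀ᶠ t in 𝓝 t₀, HasDerivAt (fun s => X (z s)) (x₁ t) t) :
    HasDerivAt x₁ (X₂ * z₁ t₀ ^ 2 + X₁ (z t₀) * z₂) t₀ := by
  have hx₁ : x₁ =ᶠ[𝓝 t₀] fun t => X₁ (z t) * z₁ t := by
    filter_upwards [hz, hX, hx] with t hzt hXt hxt
    exact hxt.unique (hXt.comp t hzt)
  refine (((hX₁.comp t₀ hz.self_of_nhds).mul hz₁).congr_of_eventuallyEq hx₁).congr_deriv ?_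
  rw [Function.comp_apply]
  ring

theorem hasDerivAt_zpow_mul_deriv {φ φ₁ : ℝ → ℝ} {φ₂ t : ℝ} (k : ℤ)
    (hφ : HasDerivAt φ (φ₁ t) t) (hφ₁ : HasDerivAt φ₁ φ₂ t) (hne : φ t ≠ 0) :
    HasDerivAt (fun s => k * φ s ^ (k - 1) * φ₁ s)
      (k * ((k - 1) * φ t ^ (k - 2) * φ₁ t ^ 2 + φ t ^ (k - 1) * φ₂)) t := by
  refine (((hφ.zpow_of_ne_zero (k - 1) hne).const_mul (k : ℝ)).mul hφ₁).congr_deriv ?_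
  rw [show k - 1 - 1 = k - 2 by ring]
  push_cast
  ring

/-- Also for `k = 0`, where `2 / 0 = 0` and `p ^ 0 = 1` make both sides vanish. -/
theorem mul_sq_eq_of_sq_eq_div {k : ℤ} {p v : ℝ} (h : v ^ 2 = 2 / (k : ℝ) * (1 - p ^ k)) :
    k * v ^ 2 = 2 * (1 - p ^ k) := by
  rcases eq_or_ne k 0 with rfl | hk
  · simp
  · rw [h]
    field_simp

theorem yoshida_identity {k : ℤ} {lam p v X₀ X₁ X₂ : ℝ} (hp : p ≠ 0)
    (henergy : k * v ^ 2 = 2 * (1 - p ^ k))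
    (h : -lam * p ^ (k - 2) * X₀ = X₂ * (k * p ^ (k - 1) * v) ^ 2 +
      X₁ * (k * ((k - 1) * p ^ (k - 2) * v ^ 2 + p ^ (k - 1) * -p ^ (k - 1)))) :
    2 * (k : ℝ) * p ^ k * (1 - p ^ k) * X₂ +
      (2 * ((k : ℝ) - 1) * (1 - p ^ k) - (k : ℝ) * p ^ k) * X₁ + lam * X₀ = 0 := by
  have hk : p ^ k = p ^ (k - 2) * p ^ 2 := by
    rw [← zpow_natCast, ← zpow_add₀ hp]
    norm_num
  have hk₁ : p ^ (k - 1) = p ^ (k - 2) * p := by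
    rw [← zpow_add_one₀ hp]
    ring_nf
  rw [hk₁] at h
  rw [hk] at henergy ⊢
  have hscaled : (2 * (k : ℝ) * (p ^ (k - 2) * p ^ 2) * (1 - p ^ (k - 2) * p ^ 2) * X₂ +
      (2 * ((k : ℝ) - 1) * (1 - p ^ (k - 2) * p ^ 2) - k * (p ^ (k - 2) * p ^ 2)) * X₁ +
      lam * X₀) * p ^ (k - 2) = 0 := by
    linear_combination -h - (k * (p ^ (k - 2)) ^ 2 * p ^ 2 * X₂ +
      ((k : ℝ) - 1) * p ^ (k - 2) * X₁) * henergy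
  exact (mul_eq_zero.mp hscaled).resolve_right (zpow_ne_zero _ hp)

theorem stmt_15_general (k : ℤ) (lam t₀ : ℝ)
    (U : Set ℝ) (hU : IsOpen U) (ht₀ : t₀ ∈ U)
    (φ φ₁ φ₂ : ℝ → ℝ)
    (hφne : ∀ t ∈ U, φ t ≠ 0)
    (hφ' : ∀ t ∈ U, HasDerivAt φ (φ₁ t) t)
    (hφ'' : ∀ t ∈ U, HasDerivAt φ₁ (φ₂ t) t)
    (henergy : ∀ t ∈ U, (φ₁ t) ^ 2 = (2 / (k : ℝ)) * (1 - φ t ^ k))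
    (hnewton : ∀ t ∈ U, φ₂ t = -(φ t ^ (k - 1)))
    (V : Set ℝ)
    (hUV : ∀ t ∈ U, φ t ^ k ∈ V)
    (X X₁ : ℝ → ℝ) (X₂ : ℝ)
    (hX' : ∀ z ∈ V, HasDerivAt X (X₁ z) z)
    (hX'' : HasDerivAt X₁ X₂ (φ t₀ ^ k))
    (x₁ : ℝ → ℝ)
    (hx' : ∀ t ∈ U, HasDerivAt (fun s => X (φ s ^ k)) (x₁ t) t)
    (hx'' : HasDerivAt x₁ (-lam * φ t₀ ^ (k - 2) * X (φ t₀ ^ k)) t₀) :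
    2 * (k : ℝ) * (φ t₀ ^ k) * (1 - φ t₀ ^ k) * X₂ +
      (2 * ((k : ℝ) - 1) * (1 - φ t₀ ^ k) - (k : ℝ) * φ t₀ ^ k) * X₁ (φ t₀ ^ k) +
      lam * X (φ t₀ ^ k) = 0 := by
  have hU₀ : ∀ᶠ t in 𝓝 t₀, t ∈ U := hU.mem_nhds ht₀
  have hz : ∀ᶠ t in 𝓝 t₀, HasDerivAt (fun s => φ s ^ k) (k * φ t ^ (k - 1) * φ₁ t) t := by
    filter_upwards [hU₀] with t ht
    exact (hφ' t ht).zpow_of_ne_zero k (hφne t ht)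
  have hz₁ := hasDerivAt_zpow_mul_deriv k (hφ' t₀ ht₀) (hφ'' t₀ ht₀) (hφne t₀ ht₀)
  have hx₁ := hasDerivAt_of_eventually_hasDerivAt_comp hz hz₁
    (hU₀.mono fun t ht => hX' _ (hUV t ht)) hX'' (hU₀.mono hx')
  rw [hnewton t₀ ht₀] at hx₁
  exact yoshida_identity (hφne t₀ ht₀) (mul_sq_eq_of_sq_eq_div (henergy t₀ ht₀))
    (hx''.unique hx₁)

/-- The Yoshida change of variable `z = φ(t)^k`: if `φ` satisfies
`φ̇² = (2/k)(1 − φ^k)` and `φ̈ = −φ^{k−1}` on a neighborhood of `t₀`, `X` is a `C²`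
function of `z` near `z₀ = φ(t₀)^k`, and the composite `x(t) = X(φ(t)^k)` satisfies
`ẍ(t₀) = −λ·φ(t₀)^{k−2}·x(t₀)`, then
`2kz₀(1−z₀)X″(z₀) + (2(k−1)(1−z₀) − kz₀)X′(z₀) + λX(z₀) = 0`. -/
theorem stmt_15 (k : ℤ) (hk : k ≠ 0) (lam t₀ : ℝ)
    (U : Set ℝ) (hU : IsOpen U) (ht₀ : t₀ ∈ U)
    (φ φ₁ φ₂ : ℝ → ℝ)
    (hφne : ∀ t ∈ U, φ t ≠ 0)
    (hφ' : ∀ t ∈ U, HasDerivAt φ (φ₁ t) t)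
    (hφ'' : ∀ t ∈ U, HasDerivAt φ₁ (φ₂ t) t)
    (henergy : ∀ t ∈ U, (φ₁ t) ^ 2 = (2 / (k : ℝ)) * (1 - φ t ^ k))
    (hnewton : ∀ t ∈ U, φ₂ t = -(φ t ^ (k - 1)))
    (V : Set ℝ) (hV : IsOpen V) (hz₀ : φ t₀ ^ k ∈ V)
    (hUV : ∀ t ∈ U, φ t ^ k ∈ V)
    (X X₁ : ℝ → ℝ) (X₂ : ℝ)
    (hX' : ∀ z ∈ V, HasDerivAt X (X₁ z) z)
    (hX'' : HasDerivAt X₁ X₂ (φ t₀ ^ k))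
    (x₁ : ℝ → ℝ)
    (hx' : ∀ t ∈ U, HasDerivAt (fun s => X (φ s ^ k)) (x₁ t) t)
    (hx'' : HasDerivAt x₁ (-lam * φ t₀ ^ (k - 2) * X (φ t₀ ^ k)) t₀) :
    2 * (k : ℝ) * (φ t₀ ^ k) * (1 - φ t₀ ^ k) * X₂ +
      (2 * ((k : ℝ) - 1) * (1 - φ t₀ ^ k) - (k : ℝ) * φ t₀ ^ k) * X₁ (φ t₀ ^ k) +
      lam * X (φ t₀ ^ k) = 0 :=
  stmt_15_general k lam t₀ U hU ht₀ φ φ₁ φ₂ hφne hφ' hφ'' henergy hnewton V hUV X X₁ X₂ hX' hX'' x₁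
    hx' hx''
end

section
/- Let F be a differential field with derivation ′ and let σ : F → F be a ring homomorphism commuting with ′ (i.e. σ(a′) = σ(a)′ for all a). Let Φ, I_α, I_γ, Ψ_α, Ψ_γ, Ψ_{2α}, Ψ_{α,γ}, Ψ ∈ F and let c_α, c_γ ∈ F be constants (c_α′ = c_γ′ = 0) such that: σ(Φ) = Φ, σ(I_α) = I_α + c_α, σ(I_γ) = I_γ + c_γ, Ψ_α′ = Φ·I_α′, Ψ_γ′ = Φ·I_γ′, Ψ_{2α}′ = Φ·I_α′·I_α, Ψ_{α,γ}′ = Φ·(I_α′·I_γ + I_γ′·I_α), and Ψ′ = Φ·(I_γ′·I_α² + 2·I_α′·I_α·I_γ). Then the element σ(Ψ) − Ψ − 2c_α·Ψ_{α,γ} − 2c_γ·Ψ_{2α} − c_α²·Ψ_γ − 2c_α·c_γ·Ψ_α is a constant of F. -/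
/-- Cocycle formula for the second level integral `Ψ_{γ,2α} = ∫Φ(I_γ I_α²)′`:
if `σ` commutes with the derivation, fixes `Φ`, and translates `I_α, I_γ` by the
constants `c_α, c_γ`, then
`σ(Ψ) − Ψ − 2c_α·Ψ_{α,γ} − 2c_γ·Ψ_{2α} − c_α²·Ψ_γ − 2c_α c_γ·Ψ_α` is a constant. -/
theorem stmt_16 {F : Type*} [Field F] (D : F → F)
    (hadd : ∀ a b : F, D (a + b) = D a + D b)
    (hmul : ∀ a b : F, D (a * b) = D a * b + a * D b)
    (σ : F →+* F) (hσD : ∀ a : F, σ (D a) = D (σ a))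
    (Φ Iα Iγ Ψα Ψγ Ψ2α Ψαγ Ψ cα cγ : F)
    (hcα : D cα = 0) (hcγ : D cγ = 0)
    (hσΦ : σ Φ = Φ) (hσIα : σ Iα = Iα + cα) (hσIγ : σ Iγ = Iγ + cγ)
    (hΨα : D Ψα = Φ * D Iα) (hΨγ : D Ψγ = Φ * D Iγ)
    (hΨ2α : D Ψ2α = Φ * D Iα * Iα)
    (hΨαγ : D Ψαγ = Φ * (D Iα * Iγ + D Iγ * Iα))
    (hΨ : D Ψ = Φ * (D Iγ * Iα ^ 2 + 2 * D Iα * Iα * Iγ)) :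
    D (σ Ψ - Ψ - 2 * cα * Ψαγ - 2 * cγ * Ψ2α - cα ^ 2 * Ψγ - 2 * cα * cγ * Ψα) = 0 := by
  have h1 : D 1 = 0 := by
    have h := hmul 1 1
    rw [one_mul, one_mul, mul_one] at h
    linear_combination -h
  have h2 : D (2 : F) = 0 := by
    have : (2 : F) = 1 + 1 := by norm_num
    rw [this, hadd, h1]; ring
  have hsub : ∀ a b : F, D (a - b) = D a - D b := by
    intro a b
    have h := hadd (a - b) b
    rw [sub_add_cancel] at h
    linear_combination -h
  have hDσIα : D (σ Iα) = D Iα := by rw [hσIα, hadd, hcα, add_zero]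
  have hDσIγ : D (σ Iγ) = D Iγ := by rw [hσIγ, hadd, hcγ, add_zero]
  have hσ2 : σ (2 : F) = 2 := map_ofNat σ 2
  have key : D (σ Ψ) = Φ * (D Iγ * (Iα + cα) ^ 2 + 2 * D Iα * (Iα + cα) * (Iγ + cγ)) := by
    rw [← hσD, hΨ, map_mul, hσΦ, map_add, map_mul, map_pow, map_mul, map_mul, map_mul,
      hσ2, hσIα, hσIγ, hσD, hσD, hDσIα, hDσIγ]
  rw [hsub, hsub, hsub, hsub, hsub, key, hmul, hmul, hmul, hmul, hmul, hmul, hmul,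
    hΨ, hΨα, hΨγ, hΨ2α, hΨαγ, hcα, hcγ, h2, sq cα, hmul, hcα]
  rw [hmul, hcα, h2]
  ring
end

section
/- Let F be a differential field with constant subfield C, let K be a differential subfield of F containing C, and let I₁, …, I_n ∈ F be such that 1, I₁, …, I_n are linearly independent over K. Let G be a set of ring homomorphisms σ : F → F commuting with the derivation and fixing K pointwise, such that for each σ ∈ G there are constants c₁(σ), …, c_n(σ) ∈ C with σ(I_j) = I_j + c_j(σ), and such that the vectors (c₁(σ), …, c_n(σ)), σ ∈ G, span Cⁿ over C. Let Ψ ∈ F, A = (a_{jk}) an n×n matrix over C, f₁, …, f_n ∈ K, and l : G → C satisfy, for all σ ∈ G: σ(Ψ) − Ψ = Σ_{j,k} c_j(σ)·a_{jk}·I_k + Σ_j c_j(σ)·f_j + l(σ). Then: (i) if A is symmetric, then for every σ ∈ G the element σ(Θ) − Θ lies in C, where Θ := Ψ − (1/2)·Σ_{j,k} a_{jk}·I_j·I_k − Σ_j f_j·I_j; (ii) conversely, if there exist a symmetric n×n matrix S over K, elements B₁, …, B_n ∈ K, and h : G → C such that σ(Ψ) − Ψ = σ(P) − P + h(σ) for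 all σ ∈ G, where P := Σ_{j,k} S_{jk}·I_j·I_k + Σ_j B_j·I_j, then A = 2S; in particular A is symmetric. -/
/-- A degree-one cocycle with constant matrix
`σ(Ψ) − Ψ = C(σ)ᵀ·A·I + C(σ)ᵀ·f + l(σ)` is a coboundary iff `A` is symmetric:
(i) if `A` is symmetric then `Θ = Ψ − ½ IᵀAI − fᵀI` satisfies `σ(Θ) − Θ ∈ C` for all
`σ ∈ G`; (ii) conversely if `σ(Ψ) − Ψ = σ(P) − P + h(σ)` with
`P = Σ S_{jk} I_j I_k + Σ B_j I_j`, `S` a symmetric matrix over `K`, `B_j ∈ K` and `h`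
constant-valued, then `A = 2S` (in particular `A` is symmetric). -/
theorem stmt_17 {F : Type*} [Field F] (D : F → F)
    (hadd : ∀ a b : F, D (a + b) = D a + D b)
    (hmul : ∀ a b : F, D (a * b) = D a * b + a * D b)
    (K : Subfield F)
    (hKD : ∀ a ∈ K, D a ∈ K)
    (hCK : ∀ a : F, D a = 0 → a ∈ K)
    (n : ℕ) (I : Fin n → F)
    (hind : ∀ (a : Fin n → F) (a₀ : F), (∀ j, a j ∈ K) → a₀ ∈ K →
      a₀ + ∑ j, a j * I j = 0 → a₀ = 0 ∧ ∀ j, a j = 0)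
    (G : Set (F →+* F))
    (hGD : ∀ σ ∈ G, ∀ a : F, σ (D a) = D (σ a))
    (hGK : ∀ σ ∈ G, ∀ a ∈ K, σ a = a)
    (c : (F →+* F) → Fin n → F)
    (hcconst : ∀ σ ∈ G, ∀ j, D (c σ j) = 0)
    (hcI : ∀ σ ∈ G, ∀ j, σ (I j) = I j + c σ j)
    (hspan : ∀ v : Fin n → F, (∀ j, D (v j) = 0) →
      ∃ (m : ℕ) (σs : Fin m → (F →+* F)) (t : Fin m → F),
        (∀ i, σs i ∈ G) ∧ (∀ i, D (t i) = 0) ∧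
        ∀ j, v j = ∑ i, t i * c (σs i) j)
    (Ψ : F) (A : Fin n → Fin n → F) (hA : ∀ j k, D (A j k) = 0)
    (f : Fin n → F) (hf : ∀ j, f j ∈ K)
    (l : (F →+* F) → F) (hl : ∀ σ ∈ G, D (l σ) = 0)
    (hcocycle : ∀ σ ∈ G, σ Ψ - Ψ =
      (∑ j, ∑ k, c σ j * A j k * I k) + (∑ j, c σ j * f j) + l σ) :
    ((∀ j k, A j k = A k j) → ∀ σ ∈ G,
      D (σ (Ψ - (1 / 2) * (∑ j, ∑ k, A j k * I j * I k) - ∑ j, f j * I j) -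
          (Ψ - (1 / 2) * (∑ j, ∑ k, A j k * I j * I k) - ∑ j, f j * I j)) = 0) ∧
    (∀ (S : Fin n → Fin n → F) (B : Fin n → F) (h : (F →+* F) → F),
      (∀ j k, S j k ∈ K) → (∀ j k, S j k = S k j) → (∀ j, B j ∈ K) →
      (∀ σ ∈ G, D (h σ) = 0) →
      (∀ σ ∈ G, σ Ψ - Ψ =
        σ ((∑ j, ∑ k, S j k * I j * I k) + ∑ j, B j * I j) -
          ((∑ j, ∑ k, S j k * I j * I k) + ∑ j, B j * I j) + h σ) →
      (∀ j k, A j k = 2 * S j k) ∧ (∀ j k, A j k = A k j)) := by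
  -- basic facts about the derivation
  have hD0 : D 0 = 0 := by
    have h := hadd 0 0
    rw [add_zero] at h
    exact (left_eq_add.mp h)
  have hD1 : D 1 = 0 := by
    have h := hmul 1 1
    rw [one_mul, mul_one, one_mul] at h
    exact (left_eq_add.mp h)
  have hDneg : ∀ a : F, D (-a) = - D a := by
    intro a
    have h := hadd a (-a)
    rw [add_neg_cancel, hD0] at h
    exact (neg_eq_of_add_eq_zero_right h.symm).symm
  have hDsub : ∀ a b : F, D (a - b) = D a - D b := by
    intro a b
    rw [sub_eq_add_neg, hadd, hDneg, ← sub_eq_add_neg]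
  have hDmul0 : ∀ a b : F, D a = 0 → D b = 0 → D (a * b) = 0 := by
    intro a b ha hb
    rw [hmul, ha, hb]; ring
  have hD2 : D 2 = 0 := by
    have h := hadd 1 1
    rw [hD1, one_add_one_eq_two, add_zero] at h
    exact h
  have hDhalf : D ((1 : F) / 2) = 0 := by
    by_cases h2 : (2 : F) = 0
    · rw [h2, div_zero]; exact hD0
    · have he : (1 : F) / 2 * 2 = 1 := by field_simp
      have hm := hmul ((1 : F) / 2) 2
      rw [he, hD1, hD2, mul_zero, add_zero] at hm
      exact (mul_eq_zero.mp hm.symm).resolve_right h2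
  have hDsumN : ∀ (N : ℕ) (g : Fin N → F), (∀ i, D (g i) = 0) → D (∑ i, g i) = 0 := by
    intro N
    induction N with
    | zero => intro g _; simpa using hD0
    | succ m ih =>
      intro g hg
      rw [Fin.sum_univ_succ, hadd, hg 0, ih (fun i => g i.succ) (fun i => hg _)]
      ring
  have hfix : ∀ σ ∈ G, ∀ a : F, D a = 0 → σ a = a := fun σ hσ a ha => hGK σ hσ a (hCK a ha)
  have hcK : ∀ σ ∈ G, ∀ j, c σ j ∈ K := fun σ hσ j => hCK _ (hcconst σ hσ j)
  have hAK : ∀ j k, A j k ∈ K := fun j k => hCK _ (hA j k)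
  have h2K : (2 : F) ∈ K := by
    have h := add_mem K.one_mem K.one_mem
    rwa [one_add_one_eq_two] at h
  constructor
  · -- part (i)
    intro hAsym σ hσ
    have hσA : ∀ j k, σ (A j k) = A j k := fun j k => hfix σ hσ _ (hA j k)
    have hσf : ∀ j, σ (f j) = f j := fun j => hGK σ hσ _ (hf j)
    have hσI := hcI σ hσ
    have hΨ : σ Ψ = Ψ + ((∑ j, ∑ k, c σ j * A j k * I k) + (∑ j, c σ j * f j) + l σ) :=
      sub_eq_iff_eq_add'.mp (hcocycle σ hσ)
    have ehalf : σ ((1 : F) / 2) = 1 / 2 := by rw [map_div₀, map_one, map_ofNat]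
    by_cases h2 : (2 : F) = 0
    · -- characteristic 2 : all the constants c σ j vanish
      have hc0 : ∀ j, c σ j = 0 := by
        intro j
        have hII : D (I j * I j) = 0 := by
          rw [hmul]
          have e : D (I j) * I j + I j * D (I j) = 2 * (I j * D (I j)) := by ring
          rw [e, h2, zero_mul]
        have hfixII : σ (I j * I j) = I j * I j := hfix σ hσ _ hII
        rw [map_mul, hcI σ hσ j] at hfixII
        have hcc : c σ j * c σ j = 0 := by
          linear_combination hfixII - (I j * c σ j) * h2
        exact mul_self_eq_zero.mp hcc
      have key0 : σ (Ψ - (1 / 2) * (∑ j, ∑ k, A j k * I j * I k) - ∑ j, f j * I j) -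
            (Ψ - (1 / 2) * (∑ j, ∑ k, A j k * I j * I k) - ∑ j, f j * I j) = l σ := by
        simp only [map_sub, map_mul, map_sum, hσA, hσf, hσI, hΨ, ehalf, hc0, add_zero,
          zero_mul, mul_zero, Finset.sum_const_zero, zero_add]
        ring
      rw [key0]
      exact hl σ hσ
    have key : σ (Ψ - (1 / 2) * (∑ j, ∑ k, A j k * I j * I k) - ∑ j, f j * I j) -
          (Ψ - (1 / 2) * (∑ j, ∑ k, A j k * I j * I k) - ∑ j, f j * I j)
        = l σ - 1 / 2 * ∑ j, ∑ k, A j k * c σ j * c σ k := by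
      simp only [map_sub, map_mul, map_sum, hσA, hσf, hσI, hΨ, ehalf]
      have e : ∀ j k : Fin n, A j k * (I j + c σ j) * (I k + c σ k)
          = A j k * I j * I k + (A j k * I j * c σ k + c σ j * A j k * I k)
            + A j k * c σ j * c σ k := fun j k => by ring
      have EA : (∑ j, ∑ k, A j k * (I j + c σ j) * (I k + c σ k))
          = (∑ j, ∑ k, A j k * I j * I k) + 2 * (∑ j, ∑ k, c σ j * A j k * I k)
            + ∑ j, ∑ k, A j k * c σ j * c σ k := by
        simp only [e, Finset.sum_add_distrib]
        have sw : (∑ j, ∑ k, A j k * I j * c σ k) = ∑ j, ∑ k, c σ j * A j k * I k := by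
          rw [Finset.sum_comm]
          exact Finset.sum_congr rfl fun k _ => Finset.sum_congr rfl fun j _ => by
            rw [hAsym j k]; ring
        rw [sw]; ring
      have EF : (∑ j, f j * (I j + c σ j)) = (∑ j, f j * I j) + ∑ j, c σ j * f j := by
        have e2 : ∀ j : Fin n, f j * (I j + c σ j) = f j * I j + c σ j * f j := fun j => by ring
        simp only [e2, Finset.sum_add_distrib]
      rw [EA, EF]
      field_simp
      ring
    rw [key, hDsub, hl σ hσ]
    have hT : D (1 / 2 * ∑ j, ∑ k, A j k * c σ j * c σ k) = 0 :=
      hDmul0 _ _ hDhalf (hDsumN n _ (fun j => hDsumN n _ (fun k =>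
        hDmul0 _ _ (hDmul0 _ _ (hA j k) (hcconst σ hσ j)) (hcconst σ hσ k))))
    rw [hT, sub_zero]
  · -- part (ii)
    intro S B h hSK hSsym hBK hh hcob
    have key2 : ∀ σ ∈ G, ∀ k, (∑ j, c σ j * (A j k - 2 * S j k)) = 0 := by
      intro σ hσ
      have hσS : ∀ j k, σ (S j k) = S j k := fun j k => hGK σ hσ _ (hSK j k)
      have hσB : ∀ j, σ (B j) = B j := fun j => hGK σ hσ _ (hBK j)
      have heq := (hcocycle σ hσ).symm.trans (hcob σ hσ)
      simp only [map_add, map_sum, map_mul, hσS, hσB, hcI σ hσ] at heq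
      have E1 : (∑ j, ∑ k, S j k * (I j + c σ j) * (I k + c σ k))
          = (∑ j, ∑ k, S j k * I j * I k) + 2 * (∑ j, ∑ k, S j k * (c σ j * I k))
            + ∑ j, ∑ k, S j k * (c σ j * c σ k) := by
        have e : ∀ j k : Fin n, S j k * (I j + c σ j) * (I k + c σ k)
            = S j k * I j * I k + (S j k * (I j * c σ k) + S j k * (c σ j * I k))
              + S j k * (c σ j * c σ k) := fun j k => by ring
        simp only [e, Finset.sum_add_distrib]
        have sw : (∑ j, ∑ k, S j k * (I j * c σ k)) = ∑ j, ∑ k, S j k * (c σ j * I k) := by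
          rw [Finset.sum_comm]
          exact Finset.sum_congr rfl fun k _ => Finset.sum_congr rfl fun j _ => by
            rw [hSsym j k]; ring
        rw [sw]; ring
      have E2 : (∑ j, B j * (I j + c σ j)) = (∑ j, B j * I j) + ∑ j, B j * c σ j := by
        simp only [mul_add, Finset.sum_add_distrib]
      rw [E1, E2] at heq
      have E3 : (∑ k, (∑ j, c σ j * (A j k - 2 * S j k)) * I k)
          = (∑ j, ∑ k, c σ j * A j k * I k) - 2 * ∑ j, ∑ k, S j k * (c σ j * I k) := by
        simp only [Finset.sum_mul]
        rw [Finset.sum_comm]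
        have e : ∀ (j k : Fin n), c σ j * (A j k - 2 * S j k) * I k
            = c σ j * A j k * I k - 2 * (S j k * (c σ j * I k)) := fun j k => by ring
        simp only [e, Finset.sum_sub_distrib, ← Finset.mul_sum]
      have hzero : ((∑ j, c σ j * f j) + l σ - (∑ j, ∑ k, S j k * (c σ j * c σ k))
            - (∑ j, B j * c σ j) - h σ)
          + ∑ k, (∑ j, c σ j * (A j k - 2 * S j k)) * I k = 0 := by
        rw [E3]
        linear_combination heq
      have hz := hind (fun k => ∑ j, c σ j * (A j k - 2 * S j k))
        ((∑ j, c σ j * f j) + l σ - (∑ j, ∑ k, S j k * (c σ j * c σ k))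
          - (∑ j, B j * c σ j) - h σ)
        (fun k => sum_mem fun j _ => mul_mem (hcK σ hσ j)
          (sub_mem (hAK j k) (mul_mem h2K (hSK j k))))
        (sub_mem (sub_mem (sub_mem
          (add_mem (sum_mem fun j _ => mul_mem (hcK σ hσ j) (hf j)) (hCK _ (hl σ hσ)))
          (sum_mem fun j _ => sum_mem fun k _ =>
            mul_mem (hSK j k) (mul_mem (hcK σ hσ j) (hcK σ hσ k))))
          (sum_mem fun j _ => mul_mem (hBK j) (hcK σ hσ j)))
          (hCK _ (hh σ hσ)))
        hzero
      exact hz.2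
    have main : ∀ j k, A j k = 2 * S j k := by
      intro j0 k
      obtain ⟨m, σs, t, hσsG, htc, hv⟩ := hspan (fun j => if j = j0 then 1 else 0)
        (fun j => by by_cases hj : j = j0 <;> simp [hj, hD0, hD1])
      have hsum : (∑ j, (if j = j0 then (1 : F) else 0) * (A j k - 2 * S j k)) = 0 := by
        calc (∑ j, (if j = j0 then (1 : F) else 0) * (A j k - 2 * S j k))
            = ∑ j, (∑ i, t i * c (σs i) j) * (A j k - 2 * S j k) :=
              Finset.sum_congr rfl fun j _ => by rw [← hv j]
          _ = ∑ i, t i * ∑ j, c (σs i) j * (A j k - 2 * S j k) := by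
              simp only [Finset.sum_mul]
              rw [Finset.sum_comm]
              exact Finset.sum_congr rfl fun i _ => by
                rw [Finset.mul_sum]
                exact Finset.sum_congr rfl fun j _ => by ring
          _ = 0 := by
              refine Finset.sum_eq_zero fun i _ => ?_
              rw [key2 (σs i) (hσsG i) k, mul_zero]
      have hval : (∑ j, (if j = j0 then (1 : F) else 0) * (A j k - 2 * S j k))
          = A j0 k - 2 * S j0 k := by
        simp [Finset.sum_ite_eq']
      rw [hval] at hsum
      exact sub_eq_zero.mp hsum
    exact ⟨main, fun j k => by rw [main j k, main k j, hSsym j k]⟩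
end
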